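/- arXiv:math/0212121 — 3 statements merged into one kernel-verified Lean document; each statement's English description precedes it below -/
import Mathlib

section
/- For every d ≥ 1 and all indices i, j₁,…,j_d ∈ [n], the formal Gaussian integral with identity covariances of U := s_i · ū_{j₁}⋯ū_{j_d} · exp(s̄F(t) + t̄G(u)) ∈ K is summable, and ∫ ds̄ ds dt̄ dt dū du e^{−s̄s−t̄t−ūu} U = μ(j₁,…,j_d)! · (coefficient of X^{μ(j₁,…,j_d)} in F_i(G(X))), i.e. it equals the tensor coefficient (F∘G)^{[d]}_{i,j₁…j_d} = ∂^d/∂X_{j₁}⋯∂X_{j_d}|_{X=0} F_i(G(X)) of the composition F∘G. -/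
noncomputable section

/-- Substitution of the system `P = (P_i)` (with zero constant terms) for the variables of
`h ∈ R[[X₁,…,X_n]]`. -/
def substPS {R : Type} [CommRing R] {σ : Type} {n : ℕ}
    (P : Fin n → MvPowerSeries σ R) (h : MvPowerSeries (Fin n) R) : MvPowerSeries σ R :=
  fun m => ∑ᶠ ν : Fin n →₀ ℕ,
    MvPowerSeries.coeff ν h * MvPowerSeries.coeff m (∏ i, (P i) ^ (ν i))

/-- The exponential `exp f = Σ_k f^k/k!` of a formal power series (intended for `f` with
zero constant term). -/
def expPS {R : Type} [CommRing R] [Algebra ℚ R] {σ : Type} (f : MvPowerSeries σ R) :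
    MvPowerSeries σ R :=
  fun m => ∑ k ∈ Finset.range (m.sum (fun _ e => e) + 1),
    algebraMap ℚ R (1 / k.factorial) * MvPowerSeries.coeff m (f ^ k)

/-- Variables of the ring `K = R[[s̄,s,t̄,t,ū,u]]`: `s̄_i`. -/
def sbv {n : ℕ} (i : Fin n) : Fin 6 × Fin n := ((0 : Fin 6), i)
/-- `s_i`. -/
def sv {n : ℕ} (i : Fin n) : Fin 6 × Fin n := ((1 : Fin 6), i)
/-- `t̄_i`. -/
def tbv {n : ℕ} (i : Fin n) : Fin 6 × Fin n := ((2 : Fin 6), i)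
/-- `t_i`. -/
def tv {n : ℕ} (i : Fin n) : Fin 6 × Fin n := ((3 : Fin 6), i)
/-- `ū_i`. -/
def ubv {n : ℕ} (i : Fin n) : Fin 6 × Fin n := ((4 : Fin 6), i)
/-- `u_i`. -/
def uv {n : ℕ} (i : Fin n) : Fin 6 × Fin n := ((5 : Fin 6), i)

/-- The monomial exponent `s̄^{a₁} s^{a₂} t̄^{a₃} t^{a₄} ū^{a₅} u^{a₆}`. -/
def hexExp {n : ℕ} (a₁ a₂ a₃ a₄ a₅ a₆ : Fin n →₀ ℕ) : (Fin 6 × Fin n) →₀ ℕ :=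
  a₁.mapDomain sbv + a₂.mapDomain sv + a₃.mapDomain tbv + a₄.mapDomain tv +
    a₅.mapDomain ubv + a₆.mapDomain uv

/-- `α! = α₁!⋯α_n!` as an element of `R`. -/
def multiFactorial {R : Type} [CommRing R] {n : ℕ} (a : Fin n →₀ ℕ) : R :=
  ((a.prod fun _ e => e.factorial : ℕ) : R)

/-- Summability of the formal Gaussian integral with identity covariances of
`U ∈ K = R[[s̄,s,t̄,t,ū,u]]`: only finitely many diagonal monomials contribute. -/
def hexGaussSummable {R : Type} [CommRing R] {n : ℕ}
    (U : MvPowerSeries (Fin 6 × Fin n) R) : Prop :=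
  {p : (Fin n →₀ ℕ) × (Fin n →₀ ℕ) × (Fin n →₀ ℕ) |
    multiFactorial (R := R) p.1 * multiFactorial (R := R) p.2.1 *
      multiFactorial (R := R) p.2.2 *
      MvPowerSeries.coeff (hexExp p.1 p.1 p.2.1 p.2.1 p.2.2 p.2.2) U ≠ 0}.Finite

/-- The formal Gaussian integral `∫ds̄ ds dt̄ dt dū du e^{−s̄s−t̄t−ūu} U ∈ R` with identity
covariances: the monomial `s̄^{α₁}s^{α₂}t̄^{α₃}t^{α₄}ū^{α₅}u^{α₆}` integrates to
`α₁!α₃!α₅!` if `α₁ = α₂`, `α₃ = α₄`, `α₅ = α₆` and to `0` otherwise. -/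
def hexGaussInt {R : Type} [CommRing R] {n : ℕ}
    (U : MvPowerSeries (Fin 6 × Fin n) R) : R :=
  ∑ᶠ p : (Fin n →₀ ℕ) × (Fin n →₀ ℕ) × (Fin n →₀ ℕ),
    multiFactorial (R := R) p.1 * multiFactorial (R := R) p.2.1 *
      multiFactorial (R := R) p.2.2 *
      MvPowerSeries.coeff (hexExp p.1 p.1 p.2.1 p.2.1 p.2.2 p.2.2) U

namespace GaussAux
open MvPowerSeries Finsupp Function
variable {R : Type} [CommRing R] {σ τ : Type}


/-- weighted degree of a multi-exponent -/
def deg {σ : Type} (w : σ → ℕ) (m : σ →₀ ℕ) : ℕ := m.sum fun v e => w v * e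

lemma deg_add {σ : Type} (w : σ → ℕ) (p q : σ →₀ ℕ) : deg w (p + q) = deg w p + deg w q :=
  Finsupp.sum_add_index' (fun a => by simp) (fun a b c => by ring)

@[simp] lemma deg_zero {σ : Type} (w : σ → ℕ) : deg w (0 : σ →₀ ℕ) = 0 := by simp [deg]

lemma deg_single {σ : Type} (w : σ → ℕ) (v : σ) (e : ℕ) : deg w (Finsupp.single v e) = w v * e :=
  Finsupp.sum_single_index (by simp)

lemma deg_mapDomain {σ τ : Type} (w : τ → ℕ) (f : σ → τ) (x : σ →₀ ℕ) :
    deg w (Finsupp.mapDomain f x) = deg (w ∘ f) x :=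
  Finsupp.sum_mapDomain_index (fun a => by simp) (fun a b c => by ring)

lemma le_deg_one {σ : Type} (m : σ →₀ ℕ) (v : σ) : m v ≤ deg (fun _ => 1) m := by
  classical
  by_cases hv : v ∈ m.support
  · simpa [deg, Finsupp.sum] using Finset.single_le_sum (f := fun v => m v)
      (fun i _ => Nat.zero_le _) hv
  · simp [Finsupp.notMem_support_iff.1 hv]

lemma deg_eq_zero_iff {σ : Type} (m : σ →₀ ℕ) : deg (fun _ => 1) m = 0 ↔ m = 0 := by
  constructor
  · intro h
    ext v
    have := le_deg_one m v
    simp only [Finsupp.coe_zero, Pi.zero_apply]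
    omega
  · rintro rfl; simp

variable {R : Type} [CommRing R] {σ : Type}


/-- existence of a nonzero decomposition for a nonzero product coefficient -/
lemma exists_of_coeff_mul_ne_zero {f g : MvPowerSeries σ R} {m : σ →₀ ℕ}
    (h : MvPowerSeries.coeff m (f * g) ≠ 0) :
    ∃ p q : σ →₀ ℕ, p + q = m ∧ MvPowerSeries.coeff p f ≠ 0 ∧ MvPowerSeries.coeff q g ≠ 0 := by
  classical
  rw [MvPowerSeries.coeff_mul] at h
  obtain ⟨pq, hmem, hne⟩ := Finset.exists_ne_zero_of_sum_ne_zero h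
  exact ⟨pq.1, pq.2, Finset.HasAntidiagonal.mem_antidiagonal.1 hmem, left_ne_zero_of_mul hne,
    right_ne_zero_of_mul hne⟩

/-- `f` uses only variables in `A` -/
def SuppOn (A : Set σ) (f : MvPowerSeries σ R) : Prop :=
  ∀ m : σ →₀ ℕ, MvPowerSeries.coeff m f ≠ 0 → (m.support : Set σ) ⊆ A

lemma SuppOn.mul {A : Set σ} {f g : MvPowerSeries σ R} (hf : SuppOn A f) (hg : SuppOn A g) :
    SuppOn A (f * g) := by
  intro m hm
  obtain ⟨p, q, rfl, hp, hq⟩ := exists_of_coeff_mul_ne_zero hm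
  refine subset_trans ?_ (Set.union_subset (hf p hp) (hg q hq))
  intro v hv
  classical
  simpa using Finset.mem_of_subset Finsupp.support_add hv

lemma SuppOn.pow {A : Set σ} {f : MvPowerSeries σ R} (hf : SuppOn A f) (k : ℕ) (hk : 1 ≤ k) :
    SuppOn A (f ^ k) := by
  induction k with
  | zero => omega
  | succ k ih =>
    rcases Nat.eq_or_lt_of_le hk with h | h
    · simpa [← h] using hf
    · have := ih (by omega)
      rw [pow_succ]
      exact this.mul hf

lemma SuppOn.one {A : Set σ} : SuppOn A (1 : MvPowerSeries σ R) := by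
  intro m hm
  classical
  have : m = 0 := by
    by_contra h
    exact hm (by simp [MvPowerSeries.coeff_one, h])
  simp [this]

lemma SuppOn.pow' {A : Set σ} {f : MvPowerSeries σ R} (hf : SuppOn A f) (k : ℕ) :
    SuppOn A (f ^ k) := by
  cases k with
  | zero => simpa using SuppOn.one
  | succ k => exact hf.pow _ (by omega)

lemma SuppOn.sum {A : Set σ} {ι : Type*} {s : Finset ι} {f : ι → MvPowerSeries σ R}
    (hf : ∀ j ∈ s, SuppOn A (f j)) : SuppOn A (∑ j ∈ s, f j) := by
  intro m hm
  have : ∃ j ∈ s, MvPowerSeries.coeff m (f j) ≠ 0 := by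
    by_contra h
    push_neg at h
    exact hm (by simp [map_sum, Finset.sum_eq_zero h])
  obtain ⟨j, hj, hne⟩ := this
  exact hf j hj m hne

lemma SuppOn.monomial {A : Set σ} {e : σ →₀ ℕ} (he : (e.support : Set σ) ⊆ A) (a : R) :
    SuppOn A (MvPowerSeries.monomial e a) := by
  classical
  intro m hm
  rw [MvPowerSeries.coeff_monomial] at hm
  split at hm
  · subst ‹m = e›; exact he
  · exact absurd rfl hm

/-- homogeneity wrt a weight -/
def Homog (w : σ → ℕ) (a : ℕ) (f : MvPowerSeries σ R) : Prop :=
  ∀ m : σ →₀ ℕ, MvPowerSeries.coeff m f ≠ 0 → deg w m = a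

lemma Homog.mul {w : σ → ℕ} {a b : ℕ} {f g : MvPowerSeries σ R}
    (hf : Homog w a f) (hg : Homog w b g) : Homog w (a + b) (f * g) := by
  intro m hm
  obtain ⟨p, q, rfl, hp, hq⟩ := exists_of_coeff_mul_ne_zero hm
  rw [deg_add, hf p hp, hg q hq]

lemma Homog.pow {w : σ → ℕ} {a : ℕ} {f : MvPowerSeries σ R} (hf : Homog w a f) (k : ℕ) :
    Homog w (k * a) (f ^ k) := by
  induction k with
  | zero =>
    intro m hm
    classical
    have : m = 0 := by
      by_contra h
      exact hm (by simp [pow_zero, MvPowerSeries.coeff_one, h])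
    simp [this]
  | succ k ih =>
    rw [pow_succ]
    have := ih.mul hf
    simpa [Nat.succ_mul] using this

lemma Homog.sum {w : σ → ℕ} {a : ℕ} {ι : Type*} {s : Finset ι} {f : ι → MvPowerSeries σ R}
    (hf : ∀ j ∈ s, Homog w a (f j)) : Homog w a (∑ j ∈ s, f j) := by
  intro m hm
  have : ∃ j ∈ s, MvPowerSeries.coeff m (f j) ≠ 0 := by
    by_contra h
    push_neg at h
    exact hm (by simp [map_sum, Finset.sum_eq_zero h])
  obtain ⟨j, hj, hne⟩ := this
  exact hf j hj m hne

lemma Homog.monomial {w : σ → ℕ} {e : σ →₀ ℕ} (a : R) :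
    Homog w (deg w e) (MvPowerSeries.monomial e a) := by
  classical
  intro m hm
  rw [MvPowerSeries.coeff_monomial] at hm
  split at hm
  · subst ‹m = e›; rfl
  · exact absurd rfl hm

/-- lower bound on weights -/
def DegGe (w : σ → ℕ) (a : ℕ) (f : MvPowerSeries σ R) : Prop :=
  ∀ m : σ →₀ ℕ, MvPowerSeries.coeff m f ≠ 0 → a ≤ deg w m

lemma DegGe.mul {w : σ → ℕ} {a b : ℕ} {f g : MvPowerSeries σ R}
    (hf : DegGe w a f) (hg : DegGe w b g) : DegGe w (a + b) (f * g) := by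
  intro m hm
  obtain ⟨p, q, rfl, hp, hq⟩ := exists_of_coeff_mul_ne_zero hm
  rw [deg_add]
  exact Nat.add_le_add (hf p hp) (hg q hq)

lemma DegGe.pow {w : σ → ℕ} {a : ℕ} {f : MvPowerSeries σ R} (hf : DegGe w a f) (k : ℕ) :
    DegGe w (k * a) (f ^ k) := by
  induction k with
  | zero => intro m hm; simp
  | succ k ih =>
    rw [pow_succ]
    have := ih.mul hf
    simpa [Nat.succ_mul] using this

variable {τ : Type}


lemma coeff_mul_disjoint {A B : Set σ} (hAB : Disjoint A B) {f g : MvPowerSeries σ R}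
    (hf : SuppOn A f) (hg : SuppOn B g) (p q : σ →₀ ℕ)
    (hp : (p.support : Set σ) ⊆ A) (hq : (q.support : Set σ) ⊆ B) :
    MvPowerSeries.coeff (p + q) (f * g) =
      MvPowerSeries.coeff p f * MvPowerSeries.coeff q g := by
  classical
  rw [MvPowerSeries.coeff_mul]
  refine Finset.sum_eq_single_of_mem (p, q) (Finset.HasAntidiagonal.mem_antidiagonal.2 rfl) ?_
  rintro ⟨a, b⟩ hmem hne
  by_contra h
  have ha := hf a (left_ne_zero_of_mul h)
  have hb := hg b (right_ne_zero_of_mul h)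
  have hab : a + b = p + q := Finset.HasAntidiagonal.mem_antidiagonal.1 hmem
  have key : ∀ v, a v = p v ∧ b v = q v := by
    intro v
    have hv : a v + b v = p v + q v := by
      have := congrArg (fun x => x v) hab
      simpa [Finsupp.add_apply] using this
    by_cases hvA : v ∈ A
    · have hvB : v ∉ B := Set.disjoint_left.1 hAB hvA
      have hb0 : b v = 0 := by
        by_contra hb0
        exact hvB (hb (Finsupp.mem_support_iff.2 hb0))
      have hq0 : q v = 0 := by
        by_contra hq0
        exact hvB (hq (Finsupp.mem_support_iff.2 hq0))
      omega
    · have ha0 : a v = 0 := by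
        by_contra ha0
        exact hvA (ha (Finsupp.mem_support_iff.2 ha0))
      have hp0 : p v = 0 := by
        by_contra hp0
        exact hvA (hp (Finsupp.mem_support_iff.2 hp0))
      omega
  exact hne (Prod.ext (Finsupp.ext fun v => (key v).1) (Finsupp.ext fun v => (key v).2))

lemma antidiagonal_mapDomain [DecidableEq σ] [DecidableEq τ] (e : σ → τ) (he : Injective e) (ν : σ →₀ ℕ) :
    Finset.HasAntidiagonal.antidiagonal (Finsupp.mapDomain e ν) =
      (Finset.HasAntidiagonal.antidiagonal ν).map
        ⟨fun pq => (Finsupp.mapDomain e pq.1, Finsupp.mapDomain e pq.2), by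
          rintro ⟨a, b⟩ ⟨c, d⟩ hcd
          simp only [Prod.mk.injEq] at hcd
          exact Prod.ext (Finsupp.mapDomain_injective he hcd.1)
            (Finsupp.mapDomain_injective he hcd.2)⟩ := by
  classical
  ext ⟨p, q⟩
  simp only [Finset.HasAntidiagonal.mem_antidiagonal, Finset.mem_map, Function.Embedding.coeFn_mk,
    Prod.mk.injEq, Prod.exists]
  constructor
  · intro h
    have hsupp : ((p + q).support : Set τ) ⊆ Set.range e := by
      rw [h]
      intro v hv
      have := Finsupp.mapDomain_support (f := e) (s := ν)
      have hv' := this hv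
      obtain ⟨a, _, rfl⟩ := Finset.mem_image.1 hv'
      exact ⟨a, rfl⟩
    have hps : (p.support : Set τ) ⊆ Set.range e := by
      refine subset_trans ?_ hsupp
      intro v hv
      have : p v ≠ 0 := Finsupp.mem_support_iff.1 hv
      exact Finsupp.mem_support_iff.2 (by simp [Finsupp.add_apply]; omega)
    have hqs : (q.support : Set τ) ⊆ Set.range e := by
      refine subset_trans ?_ hsupp
      intro v hv
      have : q v ≠ 0 := Finsupp.mem_support_iff.1 hv
      exact Finsupp.mem_support_iff.2 (by simp [Finsupp.add_apply]; omega)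
    show ∃ a b, a + b = ν ∧ (Finsupp.mapDomain e a, Finsupp.mapDomain e b) = (p, q)
    simp only [Prod.mk.injEq]
    refine ⟨Finsupp.comapDomain e p he.injOn, Finsupp.comapDomain e q he.injOn, ?_, ?_, ?_⟩
    · apply Finsupp.mapDomain_injective he
      rw [Finsupp.mapDomain_add, Finsupp.mapDomain_comapDomain e he p hps,
        Finsupp.mapDomain_comapDomain e he q hqs, h]
    · exact Finsupp.mapDomain_comapDomain e he p hps
    · exact Finsupp.mapDomain_comapDomain e he q hqs
  · rintro ⟨a, b, hab, rfl, rfl⟩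
    rw [← Finsupp.mapDomain_add, hab]

/-- `f'` is the renaming of `f` along `e` -/
def Rn (e : σ → τ) (f' : MvPowerSeries τ R) (f : MvPowerSeries σ R) : Prop :=
  (∀ ν : σ →₀ ℕ, MvPowerSeries.coeff (Finsupp.mapDomain e ν) f' = MvPowerSeries.coeff ν f)
  ∧ SuppOn (Set.range e) f'

lemma Rn.one (e : σ → τ) (he : Injective e) : Rn e (1 : MvPowerSeries τ R) 1 := by
  classical
  constructor
  · intro ν
    rw [MvPowerSeries.coeff_one, MvPowerSeries.coeff_one]
    have : Finsupp.mapDomain e ν = 0 ↔ ν = 0 := by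
      constructor
      · intro h
        apply Finsupp.mapDomain_injective he
        simpa [Finsupp.mapDomain_zero] using h
      · rintro rfl; simp [Finsupp.mapDomain_zero]
    simp [this]
  · intro m hm
    have : m = 0 := by
      by_contra h
      exact hm (by simp [MvPowerSeries.coeff_one, h])
    simp [this]

lemma Rn.mul {e : σ → τ} (he : Injective e) {f' g' : MvPowerSeries τ R}
    {f g : MvPowerSeries σ R} (hf : Rn e f' f) (hg : Rn e g' g) : Rn e (f' * g') (f * g) := by
  classical
  constructor
  · intro ν
    rw [MvPowerSeries.coeff_mul, MvPowerSeries.coeff_mul, antidiagonal_mapDomain e he,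
      Finset.sum_map]
    exact Finset.sum_congr rfl fun pq _ => by
      show MvPowerSeries.coeff (Finsupp.mapDomain e pq.1) f' *
        MvPowerSeries.coeff (Finsupp.mapDomain e pq.2) g' = _
      rw [hf.1, hg.1]
  · exact hf.2.mul hg.2

lemma Rn.pow {e : σ → τ} (he : Injective e) {f' : MvPowerSeries τ R} {f : MvPowerSeries σ R}
    (hf : Rn e f' f) (k : ℕ) : Rn e (f' ^ k) (f ^ k) := by
  induction k with
  | zero => simpa using Rn.one e he
  | succ k ih => rw [pow_succ, pow_succ]; exact ih.mul he hf

lemma Rn.prod {e : σ → τ} (he : Injective e) {ι : Type} {s : Finset ι}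
    {f' : ι → MvPowerSeries τ R} {f : ι → MvPowerSeries σ R}
    (hf : ∀ j ∈ s, Rn e (f' j) (f j)) : Rn e (∏ j ∈ s, f' j) (∏ j ∈ s, f j) := by
  classical
  induction s using Finset.induction with
  | empty => simpa using Rn.one e he
  | insert _ _ hne ih =>
    rw [Finset.prod_insert hne, Finset.prod_insert hne]
    exact (hf _ (Finset.mem_insert_self _ _)).mul he
      (ih fun j hj => hf j (Finset.mem_insert_of_mem hj))

lemma prod_monomial {ι : Type} (s : Finset ι) (σf : ι → (τ →₀ ℕ)) :
    (∏ j ∈ s, MvPowerSeries.monomial (σf j) (1 : R)) =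
      MvPowerSeries.monomial (∑ j ∈ s, σf j) (1 : R) := by
  classical
  induction s using Finset.induction with
  | empty => simp [MvPowerSeries.monomial_zero_one]
  | insert _ _ hne ih =>
    rw [Finset.prod_insert hne, Finset.sum_insert hne, ih,
      MvPowerSeries.monomial_mul_monomial, one_mul]

lemma prod_X_pow {n : ℕ} (e : Fin n → τ) (ν : Fin n →₀ ℕ) :
    (∏ j, (MvPowerSeries.X (e j) : MvPowerSeries τ R) ^ (ν j)) =
      MvPowerSeries.monomial (Finsupp.mapDomain e ν) 1 := by
  have h1 : ∀ j : Fin n, (MvPowerSeries.X (e j) : MvPowerSeries τ R) ^ (ν j) =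
      MvPowerSeries.monomial (Finsupp.single (e j) (ν j)) 1 := fun j =>
    MvPowerSeries.X_pow_eq (e j) (ν j)
  rw [Finset.prod_congr rfl fun j _ => h1 j, prod_monomial]
  have hmap : Finsupp.mapDomain e ν = ∑ j, Finsupp.single (e j) (ν j) :=
    Finsupp.sum_fintype _ _ fun i => Finsupp.single_zero _
  rw [hmap]

lemma Rn_substX {n : ℕ} (e : Fin n → τ) (he : Injective e) (h : MvPowerSeries (Fin n) R) :
    Rn e (substPS (fun j => MvPowerSeries.X (e j)) h) h := by
  classical
  constructor
  · intro ν
    show (∑ᶠ ν' : Fin n →₀ ℕ, MvPowerSeries.coeff ν' h *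
        MvPowerSeries.coeff (Finsupp.mapDomain e ν) (∏ i, (MvPowerSeries.X (e i)) ^ (ν' i)))
      = MvPowerSeries.coeff ν h
    have : ∀ ν' : Fin n →₀ ℕ, MvPowerSeries.coeff ν' h *
        MvPowerSeries.coeff (Finsupp.mapDomain e ν) (∏ i, (MvPowerSeries.X (e i)) ^ (ν' i)) =
        if ν' = ν then MvPowerSeries.coeff ν h else 0 := by
      intro ν'
      rw [prod_X_pow, MvPowerSeries.coeff_monomial]
      by_cases hcase : ν' = ν
      · subst hcase; simp
      · have : ¬ Finsupp.mapDomain e ν = Finsupp.mapDomain e ν' := by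
          intro hcon
          exact hcase (Finsupp.mapDomain_injective he hcon).symm
        simp [this, hcase]
    rw [finsum_congr this]
    have := finsum_eq_single (fun x : Fin n →₀ ℕ => if x = ν then MvPowerSeries.coeff ν h else 0)
      ν (fun x hx => by simp [hx])
    simpa using this
  · intro m hm
    have hne : ∃ ν' : Fin n →₀ ℕ, MvPowerSeries.coeff ν' h *
        MvPowerSeries.coeff m (∏ i, (MvPowerSeries.X (e i)) ^ (ν' i)) ≠ 0 := by
      by_contra hall
      push_neg at hall
      refine hm ?_
      show (∑ᶠ ν' : Fin n →₀ ℕ, MvPowerSeries.coeff ν' h *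
        MvPowerSeries.coeff m (∏ i, (MvPowerSeries.X (e i)) ^ (ν' i))) = 0
      exact finsum_eq_zero_of_forall_eq_zero hall
    obtain ⟨ν', hν'⟩ := hne
    have h2 := right_ne_zero_of_mul hν'
    rw [prod_X_pow, MvPowerSeries.coeff_monomial] at h2
    have hmeq : m = Finsupp.mapDomain e ν' := by
      by_contra hcon; simp [hcon] at h2
    rw [hmeq]
    intro v hv
    have hv' := Finsupp.mapDomain_support hv
    obtain ⟨a, _, rfl⟩ := Finset.mem_image.1 hv'
    exact ⟨a, rfl⟩


def vr {n : ℕ} (a : Fin 6) : Fin n → Fin 6 × Fin n := fun i => (a, i)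

lemma vr_inj {n : ℕ} (a : Fin 6) : Function.Injective (vr (n := n) a) :=
  fun i j h => congrArg Prod.snd h

lemma sbv_eq {n : ℕ} : (sbv (n := n)) = vr 0 := rfl
lemma sv_eq {n : ℕ} : (sv (n := n)) = vr 1 := rfl
lemma tbv_eq {n : ℕ} : (tbv (n := n)) = vr 2 := rfl
lemma tv_eq {n : ℕ} : (tv (n := n)) = vr 3 := rfl
lemma ubv_eq {n : ℕ} : (ubv (n := n)) = vr 4 := rfl
lemma uv_eq {n : ℕ} : (uv (n := n)) = vr 5 := rfl

lemma range_vr {n : ℕ} (a : Fin 6) :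
    Set.range (vr (n := n) a) = {v : Fin 6 × Fin n | v.1 = a} := by
  ext ⟨b, k⟩
  constructor
  · rintro ⟨j, hj⟩
    have : a = b := congrArg Prod.fst hj
    exact this.symm
  · intro hb
    have hb' : b = a := hb
    exact ⟨k, by rw [hb']; rfl⟩

lemma mapDomain_vr_apply {n : ℕ} (a b : Fin 6) (k : Fin n) (x : Fin n →₀ ℕ) :
    Finsupp.mapDomain (vr a) x (b, k) = if b = a then x k else 0 := by
  by_cases h : b = a
  · subst h
    rw [if_pos rfl]
    exact Finsupp.mapDomain_apply (vr_inj b) x k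
  · rw [if_neg h]
    exact Finsupp.mapDomain_notin_range x (b, k) (by rw [range_vr]; exact fun hc => h hc)

lemma support_mapDomain_vr {n : ℕ} (a : Fin 6) (x : Fin n →₀ ℕ) :
    ((Finsupp.mapDomain (vr a) x).support : Set (Fin 6 × Fin n)) ⊆ {v | v.1 = a} := by
  classical
  intro v hv
  obtain ⟨j, _, rfl⟩ := Finset.mem_image.1 (Finsupp.mapDomain_support hv)
  rfl

lemma deg_one_eq_sum {σ : Type} (m : σ →₀ ℕ) : deg (fun _ => 1) m = m.sum fun _ e => e := by
  simp [deg]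

lemma deg_const {σ : Type} (c : ℕ) (m : σ →₀ ℕ) :
    deg (fun _ => c) m = c * deg (fun _ => 1) m := by
  simp [deg, Finsupp.sum, Finset.mul_sum]

lemma deg_mapDomain_vr {n : ℕ} (cc : Fin 6 → ℕ) (a : Fin 6) (x : Fin n →₀ ℕ) :
    deg (fun v : Fin 6 × Fin n => cc v.1) (Finsupp.mapDomain (vr a) x) =
      cc a * deg (fun _ => 1) x := by
  rw [deg_mapDomain, ← deg_const]
  rfl

lemma SuppOn.mono {σ : Type} {A B : Set σ} {f : MvPowerSeries σ R} (hf : SuppOn A f)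
    (hAB : A ⊆ B) : SuppOn B f := fun m hm => subset_trans (hf m hm) hAB

lemma SuppOn.homog0 {σ : Type} {A : Set σ} {w : σ → ℕ} {f : MvPowerSeries σ R}
    (hf : SuppOn A f) (hw : ∀ v ∈ A, w v = 0) : Homog w 0 f := by
  intro m hm
  have hs := hf m hm
  refine Finset.sum_eq_zero fun v hv => ?_
  have h0 : w v = 0 := hw v (hs hv)
  show w v * m v = 0
  rw [h0, zero_mul]

lemma DegGe.prod {σ : Type} {w : σ → ℕ} {ι : Type} {s : Finset ι} {a : ι → ℕ}
    {f : ι → MvPowerSeries σ R} (hf : ∀ j ∈ s, DegGe w (a j) (f j)) :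
    DegGe w (∑ j ∈ s, a j) (∏ j ∈ s, f j) := by
  classical
  induction s using Finset.induction with
  | empty => intro m hm; simp
  | insert _ _ hne ih =>
    rw [Finset.prod_insert hne, Finset.sum_insert hne]
    exact (hf _ (Finset.mem_insert_self _ _)).mul
      (ih fun j hj => hf j (Finset.mem_insert_of_mem hj))

lemma SuppOn.expPS' {σ : Type} [Algebra ℚ R] {A : Set σ} {f : MvPowerSeries σ R}
    (hf : SuppOn A f) : SuppOn A (expPS f) := by
  intro m hm
  have hne : ∃ k ∈ Finset.range (m.sum (fun _ e => e) + 1),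
      algebraMap ℚ R (1 / k.factorial) * MvPowerSeries.coeff m (f ^ k) ≠ 0 := by
    by_contra hall
    push_neg at hall
    exact hm (show MvPowerSeries.coeff m (expPS f) = 0 from Finset.sum_eq_zero hall)
  obtain ⟨k, _, hk⟩ := hne
  exact hf.pow' k m (right_ne_zero_of_mul hk)

lemma X_eq {σ : Type} (s : σ) :
    (MvPowerSeries.X s : MvPowerSeries σ R) = MvPowerSeries.monomial (Finsupp.single s 1) 1 :=
  by simpa using MvPowerSeries.X_pow_eq (R := R) s 1

lemma Homog.Xvar {σ : Type} (w : σ → ℕ) (s : σ) :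
    Homog w (w s) (MvPowerSeries.X s : MvPowerSeries σ R) := by
  have := Homog.monomial (w := w) (e := Finsupp.single s 1) (1 : R)
  rw [deg_single, mul_one] at this
  rw [X_eq]
  exact this

lemma SuppOn.Xvar {σ : Type} {A : Set σ} {s : σ} (hs : s ∈ A) :
    SuppOn A (MvPowerSeries.X s : MvPowerSeries σ R) := by
  rw [X_eq]
  refine SuppOn.monomial ?_ 1
  intro v hv
  have : v = s := by
    have := Finsupp.support_single_subset (a := s) (b := (1:ℕ)) hv
    simpa using this
  rw [this]; exact hs

lemma Homog.natCast {σ : Type} (w : σ → ℕ) (c : ℕ) :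
    Homog w 0 ((c : MvPowerSeries σ R)) := by
  rw [← map_natCast MvPowerSeries.C c, MvPowerSeries.C]
  have := Homog.monomial (w := w) (e := (0 : σ →₀ ℕ)) ((c : ℕ) : R)
  simpa using this


lemma deg_one_fintype {n : ℕ} (β : Fin n →₀ ℕ) :
    deg (fun _ => 1) β = ∑ k, β k := by
  rw [deg_one_eq_sum]
  exact Finsupp.sum_fintype _ _ fun i => rfl

lemma Homog.add {σ : Type} {w : σ → ℕ} {a : ℕ} {f g : MvPowerSeries σ R}
    (hf : Homog w a f) (hg : Homog w a g) : Homog w a (f + g) := by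
  intro m hm
  rw [map_add] at hm
  by_cases h : MvPowerSeries.coeff m f ≠ 0
  · exact hf m h
  · push_neg at h
    exact hg m (by rw [h, zero_add] at hm; exact hm)

lemma homog_X_mul {σ : Type} {w : σ → ℕ} {s : σ} {T : MvPowerSeries σ R} (hT : Homog w 0 T) :
    Homog w (w s) (MvPowerSeries.X s * T) := by
  simpa using (Homog.Xvar w s).mul hT

lemma deg_mapDomain_vr' {n : ℕ} (w : Fin 6 × Fin n → ℕ) (a : Fin 6) (c : ℕ)
    (hc : ∀ k, w (vr a k) = c) (x : Fin n →₀ ℕ) :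
    deg w (Finsupp.mapDomain (vr a) x) = c * deg (fun _ => 1) x := by
  rw [deg_mapDomain]
  have hfun : w ∘ vr a = fun _ => c := funext hc
  rw [hfun, deg_const]

lemma mapDomain_vr_apply' {n : ℕ} (a b : Fin 6) (k : Fin n) (x : Fin n →₀ ℕ) :
    Finsupp.mapDomain (vr a) x (vr b k) = if b = a then x k else 0 :=
  mapDomain_vr_apply a b k x

lemma single_vr_apply {n : ℕ} (a b : Fin 6) (i k : Fin n) (c : ℕ) :
    Finsupp.single (vr a i) c (vr b k) = if a = b ∧ i = k then c else 0 := by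
  rw [Finsupp.single_apply]
  have h : (vr a i = vr b k) ↔ (a = b ∧ i = k) := by
    simp only [vr, Prod.mk.injEq]
  simp only [h]

lemma deg_M {n : ℕ} (w : Fin 6 × Fin n → ℕ) (i : Fin n) (β μ : Fin n →₀ ℕ) (c0 c2 c3 c5 : ℕ)
    (h0 : w (vr 0 i) = c0) (h2 : ∀ k, w (vr 2 k) = c2) (h3 : ∀ k, w (vr 3 k) = c3)
    (h5 : ∀ k, w (vr 5 k) = c5) :
    deg w (Finsupp.single (vr 0 i) 1 + (Finsupp.mapDomain (vr 3) β +
      (Finsupp.mapDomain (vr 2) β + Finsupp.mapDomain (vr 5) μ))) =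
    c0 + c3 * deg (fun _ => 1) β + c2 * deg (fun _ => 1) β + c5 * deg (fun _ => 1) μ := by
  rw [deg_add, deg_add, deg_add, deg_single, deg_mapDomain_vr' w 3 c3 h3,
    deg_mapDomain_vr' w 2 c2 h2, deg_mapDomain_vr' w 5 c5 h5, h0]
  ring

lemma coeff_Q_pow {n : ℕ} (G : Fin n → MvPowerSeries (Fin n) R) (β γ' : Fin n →₀ ℕ) :
    MvPowerSeries.coeff (Finsupp.mapDomain (vr 2) β + Finsupp.mapDomain (vr 5) γ')
      ((∑ k, MvPowerSeries.X (tbv k) * substPS (fun j => MvPowerSeries.X (uv j)) (G k))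
        ^ (deg (fun _ => 1) β)) =
    (Nat.multinomial Finset.univ ⇑β : R) * MvPowerSeries.coeff γ' (∏ k, G k ^ β k) := by
  classical
  set B := deg (fun _ => 1) β with hB
  set Uk : Fin n → MvPowerSeries (Fin 6 × Fin n) R :=
    fun k => substPS (fun j => MvPowerSeries.X (uv j)) (G k) with hUk
  have hRn : ∀ k, Rn (vr 5) (Uk k) (G k) := fun k => Rn_substX (vr 5) (vr_inj 5) (G k)
  rw [Finset.sum_pow_eq_sum_piAntidiag, map_sum]
  have hdisj : Disjoint {v : Fin 6 × Fin n | v.1 = 2} {v : Fin 6 × Fin n | v.1 = 5} := by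
    rw [Set.disjoint_left]
    intro v hv hv'
    have h2 : v.1 = 2 := hv
    have h5 : v.1 = 5 := hv'
    rw [h2] at h5
    exact absurd h5 (by decide)
  have hterm : ∀ c ∈ Finset.piAntidiag Finset.univ B,
      MvPowerSeries.coeff (Finsupp.mapDomain (vr 2) β + Finsupp.mapDomain (vr 5) γ')
        ((Nat.multinomial Finset.univ c : MvPowerSeries (Fin 6 × Fin n) R) *
          ∏ j, (MvPowerSeries.X (tbv j) * Uk j) ^ c j) =
      if ⇑β = c then
        (Nat.multinomial Finset.univ ⇑β : R) * MvPowerSeries.coeff γ' (∏ k, G k ^ β k)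
      else 0 := by
    intro c _
    have hprodsplit : (∏ j, (MvPowerSeries.X (tbv j) * Uk j) ^ c j)
        = (∏ j, (MvPowerSeries.X (tbv j) : MvPowerSeries (Fin 6 × Fin n) R) ^ c j) *
          ∏ j, Uk j ^ c j := by
      rw [← Finset.prod_mul_distrib]
      exact Finset.prod_congr rfl fun j _ => mul_pow _ _ _
    have hXprod : (∏ j, (MvPowerSeries.X (tbv j) : MvPowerSeries (Fin 6 × Fin n) R) ^ c j)
        = MvPowerSeries.monomial
            (Finsupp.mapDomain (vr 2) (Finsupp.equivFunOnFinite.symm c)) 1 :=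
      prod_X_pow (vr 2) (Finsupp.equivFunOnFinite.symm c)
    have hRnProd : Rn (vr 5) (∏ j, Uk j ^ c j) (∏ j, G j ^ c j) :=
      Rn.prod (vr_inj 5) (fun j _ => (hRn j).pow (vr_inj 5) (c j))
    have hf : SuppOn {v : Fin 6 × Fin n | v.1 = 2}
        (MvPowerSeries.monomial
          (Finsupp.mapDomain (vr 2) (Finsupp.equivFunOnFinite.symm c)) (1 : R)) :=
      SuppOn.monomial (support_mapDomain_vr 2 _) 1
    have hg : SuppOn {v : Fin 6 × Fin n | v.1 = 5} (∏ j, Uk j ^ c j) := by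
      have := hRnProd.2
      rwa [range_vr] at this
    rw [← map_natCast (MvPowerSeries.C) (Nat.multinomial Finset.univ c),
      MvPowerSeries.coeff_C_mul, hprodsplit, hXprod,
      coeff_mul_disjoint hdisj hf hg _ _ (support_mapDomain_vr 2 β) (support_mapDomain_vr 5 γ'),
      MvPowerSeries.coeff_monomial, hRnProd.1 γ']
    by_cases hceq : ⇑β = c
    · subst hceq
      rw [if_pos (by rw [Finsupp.equivFunOnFinite_symm_coe]), if_pos rfl]
      ring
    · rw [if_neg ?_, if_neg hceq]
      · ring
      · intro hcon
        have : β = Finsupp.equivFunOnFinite.symm c := Finsupp.mapDomain_injective (vr_inj 2) hcon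
        exact hceq (by rw [this]; rfl)
  rw [Finset.sum_congr rfl hterm, Finset.sum_ite_eq]
  rw [if_pos]
  rw [Finset.mem_piAntidiag]
  exact ⟨(deg_one_fintype β).symm, fun i _ => Finset.mem_univ i⟩


lemma coeff_exp_M {n : ℕ} [Algebra ℚ R] (F G : Fin n → MvPowerSeries (Fin n) R)
    (i : Fin n) (μ β : Fin n →₀ ℕ) :
    MvPowerSeries.coeff
        (Finsupp.single (vr 0 i) 1 + (Finsupp.mapDomain (vr 3) β +
          (Finsupp.mapDomain (vr 2) β + Finsupp.mapDomain (vr 5) μ)))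
        (expPS ((∑ k, MvPowerSeries.X (sbv k) * substPS (fun j => MvPowerSeries.X (tv j)) (F k)) +
                (∑ k, MvPowerSeries.X (tbv k) * substPS (fun j => MvPowerSeries.X (uv j)) (G k))))
      = algebraMap ℚ R
          ((((1 + deg (fun _ => 1) β) * Nat.multinomial Finset.univ ⇑β : ℕ) : ℚ) /
            ((Nat.factorial (1 + deg (fun _ => 1) β) : ℕ) : ℚ)) *
        (MvPowerSeries.coeff β (F i) * MvPowerSeries.coeff μ (∏ k, G k ^ β k)) := by
  classical
  set B := deg (fun _ => 1) β with hB
  set Tk : Fin n → MvPowerSeries (Fin 6 × Fin n) R :=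
    fun k => substPS (fun j => MvPowerSeries.X (tv j)) (F k) with hTk
  set Uk : Fin n → MvPowerSeries (Fin 6 × Fin n) R :=
    fun k => substPS (fun j => MvPowerSeries.X (uv j)) (G k) with hUk
  set P : MvPowerSeries (Fin 6 × Fin n) R := ∑ k, MvPowerSeries.X (sbv k) * Tk k with hP
  set Q : MvPowerSeries (Fin 6 × Fin n) R := ∑ k, MvPowerSeries.X (tbv k) * Uk k with hQ
  set M : (Fin 6 × Fin n) →₀ ℕ := Finsupp.single (vr 0 i) 1 + (Finsupp.mapDomain (vr 3) β +
    (Finsupp.mapDomain (vr 2) β + Finsupp.mapDomain (vr 5) μ)) with hM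
  -- support facts
  have hT3 : ∀ k, SuppOn {v : Fin 6 × Fin n | v.1 = 3} (Tk k) := by
    intro k
    have := (Rn_substX (vr 3) (vr_inj 3) (F k)).2
    rwa [range_vr] at this
  have hU5 : ∀ k, SuppOn {v : Fin 6 × Fin n | v.1 = 5} (Uk k) := by
    intro k
    have := (Rn_substX (vr 5) (vr_inj 5) (G k)).2
    rwa [range_vr] at this
  -- weights
  set wst : Fin 6 × Fin n → ℕ := fun v => if v.1 = 0 ∨ v.1 = 2 then 1 else 0 with hwst
  set wsb : Fin 6 × Fin n → ℕ := fun v => if v.1 = 0 then 1 else 0 with hwsb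
  -- homogeneity facts
  have homogP_st : Homog wst 1 P := by
    refine Homog.sum fun k _ => ?_
    have hT0 : Homog wst 0 (Tk k) := (hT3 k).homog0 (fun v hv => by
      have h3 : v.1 = 3 := hv
      simp [hwst, h3])
    have h1 : wst (vr 0 k) = 1 := by simp [hwst, vr]
    exact h1 ▸ homog_X_mul hT0
  have homogQ_st : Homog wst 1 Q := by
    refine Homog.sum fun k _ => ?_
    have hU0 : Homog wst 0 (Uk k) := (hU5 k).homog0 (fun v hv => by
      have h5 : v.1 = 5 := hv
      simp [hwst, h5])
    have h1 : wst (vr 2 k) = 1 := by simp [hwst, vr]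
    exact h1 ▸ homog_X_mul hU0
  have homogP_sb : Homog wsb 1 P := by
    refine Homog.sum fun k _ => ?_
    have hT0 : Homog wsb 0 (Tk k) := (hT3 k).homog0 (fun v hv => by
      have h3 : v.1 = 3 := hv
      simp [hwsb, h3])
    have h1 : wsb (vr 0 k) = 1 := by simp [hwsb, vr]
    exact h1 ▸ homog_X_mul hT0
  have homogQ_sb : Homog wsb 0 Q := by
    refine Homog.sum fun k _ => ?_
    have hU0 : Homog wsb 0 (Uk k) := (hU5 k).homog0 (fun v hv => by
      have h5 : v.1 = 5 := hv
      simp [hwsb, h5])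
    have hx : Homog wsb 0 (MvPowerSeries.X (tbv k) : MvPowerSeries (Fin 6 × Fin n) R) := by
      have h0 : wsb (vr 2 k) = 0 := by simp [hwsb, vr]
      exact h0 ▸ Homog.Xvar wsb (vr 2 k)
    simpa using hx.mul hU0
  -- degree computations on M
  have hdeg_st : deg wst M = 1 + B := by
    rw [hM, deg_M wst i β μ 1 1 0 0 (by simp [hwst, vr]) (fun k => by simp [hwst, vr])
      (fun k => by simp [hwst, vr]) (fun k => by simp [hwst, vr])]
    ring
  have hdeg_sb : deg wsb M = 1 := by
    rw [hM, deg_M wsb i β μ 1 0 0 0 (by simp [hwsb, vr]) (fun k => by simp [hwsb, vr])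
      (fun k => by simp [hwsb, vr]) (fun k => by simp [hwsb, vr])]
    ring
  have hdeg_one : deg (fun _ => (1:ℕ)) M = 1 + B + B + deg (fun _ => 1) μ := by
    rw [hM, deg_M (fun _ => 1) i β μ 1 1 1 1 rfl (fun _ => rfl) (fun _ => rfl) (fun _ => rfl)]
    ring
  -- step A: unfold expPS
  have hexp : MvPowerSeries.coeff M (expPS (P + Q)) =
      ∑ k ∈ Finset.range (M.sum (fun _ e => e) + 1),
        algebraMap ℚ R (1 / k.factorial) * MvPowerSeries.coeff M ((P + Q) ^ k) := rfl
  rw [hexp]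
  -- step D: only k = 1 + B survives
  have hS_st : Homog wst 1 (P + Q) := homogP_st.add homogQ_st
  have hMsum : M.sum (fun _ e => e) = 1 + B + B + deg (fun _ => 1) μ := by
    rw [← deg_one_eq_sum, hdeg_one]
  rw [Finset.sum_eq_single_of_mem (1 + B)
    (by rw [Finset.mem_range, hMsum]; omega)
    (fun k _ hk => by
      have hco : MvPowerSeries.coeff M ((P + Q) ^ k) = 0 := by
        by_contra hcon
        have := (hS_st.pow k) M hcon
        rw [hdeg_st] at this
        omega
      rw [hco, mul_zero])]
  -- step E: binomial, only j = 1 survives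
  rw [add_pow, map_sum]
  rw [Finset.sum_eq_single_of_mem 1
    (by rw [Finset.mem_range]; omega)
    (fun j _ hj => by
      have hhom : Homog wsb (j * 1 + (1 + B - j) * 0 + 0)
          (P ^ j * Q ^ (1 + B - j) * ((Nat.choose (1 + B) j : ℕ) : MvPowerSeries (Fin 6 × Fin n) R)) :=
        ((homogP_sb.pow j).mul (homogQ_sb.pow (1 + B - j))).mul (Homog.natCast wsb _)
      by_contra hcon
      have := hhom M hcon
      rw [hdeg_sb] at this
      omega)]
  rw [pow_one, show 1 + B - 1 = B by omega, Nat.choose_one_right,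
    ← map_natCast (MvPowerSeries.C) (1 + B), MvPowerSeries.coeff_mul_C]
  -- step F: pick out k = i from P
  rw [hP, Finset.sum_mul, map_sum]
  have hM0 : ∀ k : Fin n, M (vr 0 k) = if i = k then 1 else 0 := by
    intro k
    rw [hM]
    simp [Finsupp.add_apply, single_vr_apply, mapDomain_vr_apply']
  rw [Finset.sum_eq_single_of_mem i (Finset.mem_univ i)
    (fun k _ hk => by
      rw [mul_assoc, X_eq, MvPowerSeries.coeff_monomial_mul, if_neg]
      intro hle
      have h1 : (1 : ℕ) ≤ M (vr 0 k) := Finsupp.single_le_iff.1 hle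
      rw [hM0 k, if_neg (fun h => hk h.symm)] at h1
      omega)]
  rw [mul_assoc, X_eq, MvPowerSeries.coeff_monomial_mul,
    if_pos (show (Finsupp.single (sbv i) 1 : (Fin 6 × Fin n) →₀ ℕ) ≤ M from
      Finsupp.single_le_iff.2 (show (1:ℕ) ≤ M (vr 0 i) by rw [hM0 i, if_pos rfl])), one_mul]
  have hMsub : M - Finsupp.single (sbv i) 1 =
      Finsupp.mapDomain (vr 3) β + (Finsupp.mapDomain (vr 2) β + Finsupp.mapDomain (vr 5) μ) := by
    rw [hM]
    exact add_tsub_cancel_left _ _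
  rw [hMsub]
  -- step G: disjoint factorization
  have hdisj : Disjoint {v : Fin 6 × Fin n | v.1 = 3} {v : Fin 6 × Fin n | v.1 = 2 ∨ v.1 = 5} := by
    rw [Set.disjoint_left]
    intro v hv hv'
    have h3 : v.1 = 3 := hv
    rcases hv' with h | h <;> rw [h3] at h <;> exact absurd h (by decide)
  have hfT : SuppOn {v : Fin 6 × Fin n | v.1 = 3} (Tk i) := hT3 i
  have hgQ : SuppOn {v : Fin 6 × Fin n | v.1 = 2 ∨ v.1 = 5} (Q ^ B) := by
    refine SuppOn.pow' ?_ B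
    refine SuppOn.sum fun k _ => SuppOn.mul ?_ ((hU5 k).mono fun v hv => Or.inr hv)
    exact SuppOn.Xvar (Or.inl rfl)
  have hq : (((Finsupp.mapDomain (vr 2) β + Finsupp.mapDomain (vr 5) μ)).support :
      Set (Fin 6 × Fin n)) ⊆ {v | v.1 = 2 ∨ v.1 = 5} := by
    intro v hv
    have := Finsupp.support_add hv
    rcases Finset.mem_union.1 this with h | h
    · exact Or.inl (support_mapDomain_vr 2 β h)
    · exact Or.inr (support_mapDomain_vr 5 μ h)
  rw [coeff_mul_disjoint hdisj hfT hgQ _ _ (support_mapDomain_vr 3 β) hq]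
  have hTco : MvPowerSeries.coeff (Finsupp.mapDomain (vr 3) β) (Tk i)
      = MvPowerSeries.coeff β (F i) := (Rn_substX (vr 3) (vr_inj 3) (F i)).1 β
  rw [hTco]
  have hQβ : MvPowerSeries.coeff (Finsupp.mapDomain (vr 2) β + Finsupp.mapDomain (vr 5) μ)
      (Q ^ B) = (Nat.multinomial Finset.univ ⇑β : R) *
        MvPowerSeries.coeff μ (∏ k, G k ^ β k) := by
    rw [hQ, hB]
    exact coeff_Q_pow G β μ
  rw [hQβ]
  -- step H: scalar arithmetic
  rw [show ((Nat.multinomial Finset.univ ⇑β : ℕ) : R)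
      = algebraMap ℚ R ((Nat.multinomial Finset.univ ⇑β : ℕ) : ℚ) from (map_natCast _ _).symm,
    show (((1 + B : ℕ)) : R) = algebraMap ℚ R (((1 + B : ℕ)) : ℚ) from (map_natCast _ _).symm]
  have key : algebraMap ℚ R (1 / (Nat.factorial (1 + B)))
      * (MvPowerSeries.coeff β (F i) *
          (algebraMap ℚ R ((Nat.multinomial Finset.univ ⇑β : ℕ) : ℚ) *
            MvPowerSeries.coeff μ (∏ k, G k ^ β k)) *
        algebraMap ℚ R (((1 + B : ℕ)) : ℚ))
      = algebraMap ℚ R ((1 / (Nat.factorial (1 + B))) *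
          (((Nat.multinomial Finset.univ ⇑β : ℕ) : ℚ) * (((1 + B : ℕ)) : ℚ))) *
        (MvPowerSeries.coeff β (F i) * MvPowerSeries.coeff μ (∏ k, G k ^ β k)) := by
    rw [map_mul, map_mul]
    ring
  have hrat : (1 / ((Nat.factorial (1 + B) : ℕ) : ℚ)) *
      (((Nat.multinomial Finset.univ ⇑β : ℕ) : ℚ) * (((1 + B : ℕ) : ℚ))) =
      ((((1 + B) * Nat.multinomial Finset.univ ⇑β : ℕ) : ℚ) /
        ((Nat.factorial (1 + B) : ℕ) : ℚ)) := by
    push_cast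
    ring
  rw [key, hrat]


lemma SuppOn.add {σ : Type} {A : Set σ} {f g : MvPowerSeries σ R}
    (hf : SuppOn A f) (hg : SuppOn A g) : SuppOn A (f + g) := by
  intro m hm
  rw [map_add] at hm
  by_cases h : MvPowerSeries.coeff m f ≠ 0
  · exact hf m h
  · push_neg at h
    exact hg m (by rw [h, zero_add] at hm; exact hm)

lemma hexExp_apply {n : ℕ} (a1 a2 a3 a4 a5 a6 : Fin n →₀ ℕ) (b : Fin 6) (k : Fin n) :
    hexExp a1 a2 a3 a4 a5 a6 (vr b k) =
      (if b = 0 then a1 k else 0) + (if b = 1 then a2 k else 0) + (if b = 2 then a3 k else 0) +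
        (if b = 3 then a4 k else 0) + (if b = 4 then a5 k else 0) + (if b = 5 then a6 k else 0) := by
  show (Finsupp.mapDomain (vr 0) a1 + Finsupp.mapDomain (vr 1) a2 + Finsupp.mapDomain (vr 2) a3 +
      Finsupp.mapDomain (vr 3) a4 + Finsupp.mapDomain (vr 4) a5 + Finsupp.mapDomain (vr 5) a6)
      (vr b k) = _
  rw [Finsupp.add_apply, Finsupp.add_apply, Finsupp.add_apply, Finsupp.add_apply,
    Finsupp.add_apply, mapDomain_vr_apply', mapDomain_vr_apply', mapDomain_vr_apply',
    mapDomain_vr_apply', mapDomain_vr_apply', mapDomain_vr_apply']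

lemma coeff_U_formula {n : ℕ} [Algebra ℚ R] (F G : Fin n → MvPowerSeries (Fin n) R)
    (i : Fin n) {d : ℕ} (js : Fin d → Fin n) (α β γ : Fin n →₀ ℕ) :
    MvPowerSeries.coeff (hexExp α α β β γ γ)
      (MvPowerSeries.X (sv i) * (∏ r, MvPowerSeries.X (ubv (js r))) *
        expPS ((∑ k, MvPowerSeries.X (sbv k) * substPS (fun j => MvPowerSeries.X (tv j)) (F k)) +
               (∑ k, MvPowerSeries.X (tbv k) * substPS (fun j => MvPowerSeries.X (uv j)) (G k))))
    = if α = Finsupp.single i 1 ∧ γ = ∑ r, Finsupp.single (js r) 1 then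
        algebraMap ℚ R
          ((((1 + deg (fun _ => 1) β) * Nat.multinomial Finset.univ ⇑β : ℕ) : ℚ) /
            ((Nat.factorial (1 + deg (fun _ => 1) β) : ℕ) : ℚ)) *
        (MvPowerSeries.coeff β (F i) *
          MvPowerSeries.coeff (∑ r, Finsupp.single (js r) 1) (∏ k, G k ^ β k))
      else 0 := by
  classical
  set μ : Fin n →₀ ℕ := ∑ r, Finsupp.single (js r) 1 with hμ
  set E : MvPowerSeries (Fin 6 × Fin n) R :=
    expPS ((∑ k, MvPowerSeries.X (sbv k) * substPS (fun j => MvPowerSeries.X (tv j)) (F k)) +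
           (∑ k, MvPowerSeries.X (tbv k) * substPS (fun j => MvPowerSeries.X (uv j)) (G k)))
    with hE
  set e₀ : (Fin 6 × Fin n) →₀ ℕ :=
    Finsupp.single (vr 1 i) 1 + Finsupp.mapDomain (vr 4) μ with he₀
  have hmapμ : Finsupp.mapDomain (vr 4) μ = ∑ r, Finsupp.single (vr 4 (js r)) 1 := by
    rw [hμ]
    rw [show Finsupp.mapDomain (vr 4) (∑ r, Finsupp.single (js r) 1)
        = ∑ r, Finsupp.mapDomain (vr 4) (Finsupp.single (js r) 1) from
      map_sum (Finsupp.mapDomain.addMonoidHom (vr 4)) _ _]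
    exact Finset.sum_congr rfl fun r _ => Finsupp.mapDomain_single
  have hmono : (MvPowerSeries.X (sv i) : MvPowerSeries (Fin 6 × Fin n) R) *
      (∏ r, MvPowerSeries.X (ubv (js r))) = MvPowerSeries.monomial e₀ 1 := by
    have hprod : (∏ r, (MvPowerSeries.X (ubv (js r)) : MvPowerSeries (Fin 6 × Fin n) R)) =
        MvPowerSeries.monomial (∑ r, Finsupp.single (vr 4 (js r)) 1) 1 := by
      rw [Finset.prod_congr rfl fun r _ => X_eq (ubv (js r))]
      exact prod_monomial _ _
    rw [X_eq, hprod, MvPowerSeries.monomial_mul_monomial, one_mul, he₀, hmapμ]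
    rfl
  rw [hmono, MvPowerSeries.coeff_monomial_mul]
  by_cases hcase : α = Finsupp.single i 1 ∧ γ = μ
  · obtain ⟨hα, hγ⟩ := hcase
    have hkey : hexExp (Finsupp.single i 1) (Finsupp.single i 1) β β μ μ =
        e₀ + (Finsupp.single (vr 0 i) 1 + (Finsupp.mapDomain (vr 3) β +
          (Finsupp.mapDomain (vr 2) β + Finsupp.mapDomain (vr 5) μ))) := by
      show Finsupp.mapDomain (vr 0) (Finsupp.single i 1) +
        Finsupp.mapDomain (vr 1) (Finsupp.single i 1) + Finsupp.mapDomain (vr 2) β +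
        Finsupp.mapDomain (vr 3) β + Finsupp.mapDomain (vr 4) μ +
        Finsupp.mapDomain (vr 5) μ = _
      rw [Finsupp.mapDomain_single, Finsupp.mapDomain_single, he₀]
      abel
    rw [hα, hγ, hkey, if_pos le_self_add, add_tsub_cancel_left, one_mul,
      if_pos ⟨rfl, rfl⟩]
    exact coeff_exp_M F G i μ β
  · rw [if_neg hcase]
    by_cases hle : e₀ ≤ hexExp α α β β γ γ
    · rw [if_pos hle, one_mul]
      by_contra hco
      have hSuppE : SuppOn {v : Fin 6 × Fin n | v.1 = 0 ∨ v.1 = 2 ∨ v.1 = 3 ∨ v.1 = 5} E := by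
        rw [hE]
        refine SuppOn.expPS' (SuppOn.add ?_ ?_)
        · refine SuppOn.sum fun k _ => SuppOn.mul (SuppOn.Xvar (Or.inl rfl)) ?_
          have := (Rn_substX (vr 3) (vr_inj 3) (F k)).2
          rw [range_vr] at this
          exact this.mono fun v hv => Or.inr (Or.inr (Or.inl hv))
        · refine SuppOn.sum fun k _ => SuppOn.mul (SuppOn.Xvar (Or.inr (Or.inl rfl))) ?_
          have := (Rn_substX (vr 5) (vr_inj 5) (G k)).2
          rw [range_vr] at this
          exact this.mono fun v hv => Or.inr (Or.inr (Or.inr hv))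
      have hsup := hSuppE _ hco
      have hnotin : ∀ (b : Fin 6) (k : Fin n), ¬(b = 0 ∨ b = 2 ∨ b = 3 ∨ b = 5) →
          (hexExp α α β β γ γ - e₀) (vr b k) = 0 := by
        intro b k hb
        by_contra hne
        exact hb (hsup (Finsupp.mem_support_iff.2 hne))
      have he₀app : ∀ (b : Fin 6) (k : Fin n), e₀ (vr b k) =
          (if 1 = b ∧ i = k then 1 else 0) + (if b = 4 then μ k else 0) := by
        intro b k
        rw [he₀, Finsupp.add_apply, single_vr_apply, mapDomain_vr_apply']
      have hα : α = Finsupp.single i 1 := by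
        ext k
        have h0 := hnotin 1 k (by decide)
        rw [Finsupp.tsub_apply, hexExp_apply, he₀app] at h0
        simp only [show ((1:Fin 6) = 0) = False by simp, show ((1:Fin 6) = 1) = True by simp,
          show ((1:Fin 6) = 2) = False by simp, show ((1:Fin 6) = 3) = False by simp,
          show ((1:Fin 6) = 4) = False by simp, show ((1:Fin 6) = 5) = False by simp,
          if_true, if_false, true_and, zero_add, add_zero] at h0
        have hle1 := Finsupp.le_def.1 hle (vr 1 k)
        rw [hexExp_apply, he₀app] at hle1
        simp only [show ((1:Fin 6) = 0) = False by simp, show ((1:Fin 6) = 1) = True by simp,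
          show ((1:Fin 6) = 2) = False by simp, show ((1:Fin 6) = 3) = False by simp,
          show ((1:Fin 6) = 4) = False by simp, show ((1:Fin 6) = 5) = False by simp,
          if_true, if_false, true_and, zero_add, add_zero] at hle1
        rw [Finsupp.single_apply]
        by_cases hik : i = k
        · simp only [hik, if_true] at h0 hle1 ⊢
          omega
        · simp only [hik, if_false] at h0 hle1 ⊢
          omega
      have hγ : γ = μ := by
        ext k
        have h0 := hnotin 4 k (by decide)
        rw [Finsupp.tsub_apply, hexExp_apply, he₀app] at h0
        simp only [show ((4:Fin 6) = 0) = False by simp, show ((4:Fin 6) = 1) = False by simp,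
          show ((4:Fin 6) = 2) = False by simp, show ((4:Fin 6) = 3) = False by simp,
          show ((4:Fin 6) = 4) = True by simp, show ((4:Fin 6) = 5) = False by simp,
          show ((1:Fin 6) = 4) = False by simp,
          if_true, if_false, false_and, zero_add, add_zero] at h0
        have hle1 := Finsupp.le_def.1 hle (vr 4 k)
        rw [hexExp_apply, he₀app] at hle1
        simp only [show ((4:Fin 6) = 0) = False by simp, show ((4:Fin 6) = 1) = False by simp,
          show ((4:Fin 6) = 2) = False by simp, show ((4:Fin 6) = 3) = False by simp,
          show ((4:Fin 6) = 4) = True by simp, show ((4:Fin 6) = 5) = False by simp,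
          show ((1:Fin 6) = 4) = False by simp,
          if_true, if_false, false_and, zero_add, add_zero] at hle1
        omega
      exact hcase ⟨hα, hγ⟩
    · rw [if_neg hle]

end GaussAux

open MvPowerSeries Finsupp Function GaussAux in
/-- **Theorem 2 (composition via a formal Gaussian integral).**  For `d ≥ 1` and indices
`i, j₁,…,j_d ∈ [n]`, the formal Gaussian integral of
`U = s_i ū_{j₁}⋯ū_{j_d} exp(s̄F(t) + t̄G(u))` is summable and equals the tensor
coefficient `(F∘G)^{[d]}_{i,j₁…j_d} = μ(j)! · (coeff of X^{μ(j)} in F_i(G(X)))`. -/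
theorem gaussian_composition_formula
    {R : Type} [CommRing R] [Algebra ℚ R] (n : ℕ) (hn : 1 ≤ n)
    (F G : Fin n → MvPowerSeries (Fin n) R)
    (hF0 : ∀ i, MvPowerSeries.constantCoeff (F i) = 0)
    (hG0 : ∀ i, MvPowerSeries.constantCoeff (G i) = 0)
    (d : ℕ) (hd : 1 ≤ d) (i : Fin n) (js : Fin d → Fin n) :
    hexGaussSummable (R := R)
      (MvPowerSeries.X (sv i) * (∏ r, MvPowerSeries.X (ubv (js r))) *
        expPS ((∑ k, MvPowerSeries.X (sbv k) *
                  substPS (fun j => MvPowerSeries.X (tv j)) (F k)) +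
               (∑ k, MvPowerSeries.X (tbv k) *
                  substPS (fun j => MvPowerSeries.X (uv j)) (G k)))) ∧
    hexGaussInt
      (MvPowerSeries.X (sv i) * (∏ r, MvPowerSeries.X (ubv (js r))) *
        expPS ((∑ k, MvPowerSeries.X (sbv k) *
                  substPS (fun j => MvPowerSeries.X (tv j)) (F k)) +
               (∑ k, MvPowerSeries.X (tbv k) *
                  substPS (fun j => MvPowerSeries.X (uv j)) (G k))))
      = multiFactorial (R := R) (∑ r, Finsupp.single (js r) 1) *
          MvPowerSeries.coeff (∑ r, Finsupp.single (js r) 1) (substPS G (F i)) := by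
  classical
  set μ : Fin n →₀ ℕ := ∑ r, Finsupp.single (js r) 1 with hμ
  set N : ℕ := GaussAux.deg (fun _ => 1) μ with hN
  set Sfin : Finset (Fin n →₀ ℕ) :=
    Finset.Iic (Finsupp.equivFunOnFinite.symm fun _ : Fin n => N) with hSfin
  set f : (Fin n →₀ ℕ) × (Fin n →₀ ℕ) × (Fin n →₀ ℕ) → R := fun p =>
    multiFactorial (R := R) p.1 * multiFactorial (R := R) p.2.1 *
      multiFactorial (R := R) p.2.2 *
      MvPowerSeries.coeff (hexExp p.1 p.1 p.2.1 p.2.1 p.2.2 p.2.2)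
        (MvPowerSeries.X (sv i) * (∏ r, MvPowerSeries.X (ubv (js r))) *
          expPS ((∑ k, MvPowerSeries.X (sbv k) *
                    substPS (fun j => MvPowerSeries.X (tv j)) (F k)) +
                 (∑ k, MvPowerSeries.X (tbv k) *
                    substPS (fun j => MvPowerSeries.X (uv j)) (G k)))) with hf
  have hGdeg : ∀ β : Fin n →₀ ℕ,
      MvPowerSeries.coeff μ (∏ k, G k ^ β k) ≠ 0 → GaussAux.deg (fun _ => 1) β ≤ N := by
    intro β hb
    have hdg : ∀ k : Fin n, DegGe (fun _ => 1) (β k * 1) ((G k) ^ β k) := by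
      intro k
      refine DegGe.pow ?_ (β k)
      intro m hm
      by_contra hlt
      push_neg at hlt
      have hm0 : m = 0 := (deg_eq_zero_iff m).1 (by omega)
      rw [hm0] at hm
      exact hm (by rw [MvPowerSeries.coeff_zero_eq_constantCoeff]; exact hG0 k)
    have hprod := DegGe.prod (s := Finset.univ) (fun k _ => hdg k)
    have hle := hprod μ hb
    have h1 : GaussAux.deg (fun _ => 1) β = ∑ k, β k * 1 := by
      rw [deg_one_fintype]; simp
    rw [hN, h1]
    exact hle
  have hmemS : ∀ β : Fin n →₀ ℕ, GaussAux.deg (fun _ => 1) β ≤ N → β ∈ Sfin := by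
    intro β hb
    rw [hSfin, Finset.mem_Iic]
    refine Finsupp.le_def.2 fun k => ?_
    exact le_trans (le_deg_one β k) hb
  have hcancel : ∀ β : Fin n →₀ ℕ,
      multiFactorial (R := R) β * algebraMap ℚ R
        ((((1 + GaussAux.deg (fun _ => 1) β) * Nat.multinomial Finset.univ ⇑β : ℕ) : ℚ) /
          ((Nat.factorial (1 + GaussAux.deg (fun _ => 1) β) : ℕ) : ℚ)) = 1 := by
    intro β
    set B := GaussAux.deg (fun _ => 1) β with hB
    have hmf : multiFactorial (R := R) β = algebraMap ℚ R (((∏ k, (β k).factorial : ℕ) : ℚ)) := by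
      rw [multiFactorial,
        show (β.prod fun _ e => e.factorial) = ∏ k, (β k).factorial from
          Finsupp.prod_fintype _ _ fun k => rfl]
      exact (map_natCast _ _).symm
    have hnat : (∏ k, (β k).factorial) * ((1 + B) * Nat.multinomial Finset.univ ⇑β)
        = Nat.factorial (1 + B) := by
      have hspec := Nat.multinomial_spec Finset.univ ⇑β
      have hBsum : ∑ k, β k = B := (deg_one_fintype β).symm
      calc (∏ k, (β k).factorial) * ((1 + B) * Nat.multinomial Finset.univ ⇑β)
          = (1 + B) * ((∏ k, (β k).factorial) * Nat.multinomial Finset.univ ⇑β) := by ring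
        _ = (1 + B) * (∑ k, β k).factorial := by rw [hspec]
        _ = (1 + B) * B.factorial := by rw [hBsum]
        _ = Nat.factorial (1 + B) := by rw [Nat.add_comm 1 B, Nat.factorial_succ]
    have hz : ((Nat.factorial (1 + B) : ℕ) : ℚ) ≠ 0 :=
      Nat.cast_ne_zero.2 (Nat.factorial_ne_zero _)
    rw [hmf, ← map_mul, show (((∏ k, (β k).factorial : ℕ) : ℚ)) *
        ((((1 + B) * Nat.multinomial Finset.univ ⇑β : ℕ) : ℚ) /
          ((Nat.factorial (1 + B) : ℕ) : ℚ)) = 1 by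
      field_simp
      exact_mod_cast hnat, map_one]
  have hval : ∀ β : Fin n →₀ ℕ, f (Finsupp.single i 1, β, μ) =
      multiFactorial (R := R) μ * (MvPowerSeries.coeff β (F i) *
        MvPowerSeries.coeff μ (∏ k, G k ^ β k)) := by
    intro β
    have hco := coeff_U_formula F G i js (Finsupp.single i 1) β μ
    rw [if_pos ⟨rfl, hμ⟩] at hco
    have h1 : multiFactorial (R := R) (Finsupp.single i 1) = 1 := by
      rw [multiFactorial, Finsupp.prod_single_index (by norm_num)]
      norm_num
    show multiFactorial (R := R) (Finsupp.single i 1) * multiFactorial (R := R) β *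
        multiFactorial (R := R) μ *
        MvPowerSeries.coeff (hexExp (Finsupp.single i 1) (Finsupp.single i 1) β β μ μ) _ = _
    rw [hco, h1, one_mul, ← hμ]
    calc multiFactorial (R := R) β * multiFactorial (R := R) μ *
          (algebraMap ℚ R
            ((((1 + GaussAux.deg (fun _ => 1) β) * Nat.multinomial Finset.univ ⇑β : ℕ) : ℚ) /
              ((Nat.factorial (1 + GaussAux.deg (fun _ => 1) β) : ℕ) : ℚ)) *
            (MvPowerSeries.coeff β (F i) * MvPowerSeries.coeff μ (∏ k, G k ^ β k)))
        = (multiFactorial (R := R) β * algebraMap ℚ R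
            ((((1 + GaussAux.deg (fun _ => 1) β) * Nat.multinomial Finset.univ ⇑β : ℕ) : ℚ) /
              ((Nat.factorial (1 + GaussAux.deg (fun _ => 1) β) : ℕ) : ℚ))) *
          (multiFactorial (R := R) μ *
            (MvPowerSeries.coeff β (F i) * MvPowerSeries.coeff μ (∏ k, G k ^ β k))) := by
          ring
      _ = multiFactorial (R := R) μ *
            (MvPowerSeries.coeff β (F i) * MvPowerSeries.coeff μ (∏ k, G k ^ β k)) := by
          rw [hcancel β, one_mul]
  have hsupp : Function.support f ⊆
      ↑(Sfin.image fun β => ((Finsupp.single i 1 : Fin n →₀ ℕ), β, μ)) := by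
    intro p hp
    have hfne : f p ≠ 0 := hp
    have hcond : p.1 = Finsupp.single i 1 ∧ p.2.2 = μ := by
      by_contra hc
      apply hfne
      show multiFactorial (R := R) p.1 * multiFactorial (R := R) p.2.1 *
        multiFactorial (R := R) p.2.2 *
        MvPowerSeries.coeff (hexExp p.1 p.1 p.2.1 p.2.1 p.2.2 p.2.2) _ = 0
      rw [coeff_U_formula F G i js p.1 p.2.1 p.2.2, if_neg (by rw [← hμ]; exact hc), mul_zero]
    have hpeq : p = (Finsupp.single i 1, p.2.1, μ) :=
      Prod.ext hcond.1 (Prod.ext rfl hcond.2)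
    have hb : GaussAux.deg (fun _ => 1) p.2.1 ≤ N := by
      apply hGdeg
      intro hzero
      apply hfne
      rw [hpeq, hval p.2.1, hzero, mul_zero, mul_zero]
    rw [hpeq]
    exact Finset.mem_coe.2 (Finset.mem_image.2 ⟨p.2.1, hmemS _ hb, rfl⟩)
  constructor
  · exact Set.Finite.subset (Finset.finite_toSet _) hsupp
  · have h1 : hexGaussInt
        (MvPowerSeries.X (sv i) * (∏ r, MvPowerSeries.X (ubv (js r))) *
          expPS ((∑ k, MvPowerSeries.X (sbv k) *
                    substPS (fun j => MvPowerSeries.X (tv j)) (F k)) +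
                 (∑ k, MvPowerSeries.X (tbv k) *
                    substPS (fun j => MvPowerSeries.X (uv j)) (G k)))) = ∑ᶠ p, f p := rfl
    rw [h1, finsum_eq_sum_of_support_subset f hsupp,
      Finset.sum_image (fun b1 _ b2 _ h => congrArg (fun q :
        (Fin n →₀ ℕ) × (Fin n →₀ ℕ) × (Fin n →₀ ℕ) => q.2.1) h),
      Finset.sum_congr rfl fun β _ => hval β]
    have h2 : MvPowerSeries.coeff μ (substPS G (F i)) =
        ∑ᶠ ν : Fin n →₀ ℕ, MvPowerSeries.coeff ν (F i) *
          MvPowerSeries.coeff μ (∏ k, G k ^ ν k) := rfl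
    have hsupp2 : Function.support (fun ν : Fin n →₀ ℕ => MvPowerSeries.coeff ν (F i) *
        MvPowerSeries.coeff μ (∏ k, G k ^ ν k)) ⊆ ↑Sfin := by
      intro ν hν
      have : MvPowerSeries.coeff μ (∏ k, G k ^ ν k) ≠ 0 :=
        right_ne_zero_of_mul hν
      exact Finset.mem_coe.2 (hmemS _ (hGdeg _ this))
    rw [h2, finsum_eq_sum_of_support_subset _ hsupp2, Finset.mul_sum]


end
end

section
/- For every pre-Feynman diagram structure 𝓔 = (E_ū, E_u, E_int, E_ext, π_H, π_Y, ρ_u, ρ_ū) of type (I,J) on a finite set E, the automorphism group has cardinality #Aut(E,𝓔) = (∏_{p≥2} m_{H,p}! · (p!)^{m_{H,p}}) · m_Y!, where for each integer p ≥ 2, m_{H,p} := #{B ∈ π_H : #(B ∩ E_u) = p}, and m_Y := #π_Y (the product is finite since m_{H,p} = 0 for all but finitely many p). -/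
noncomputable section

/-- A pre-Feynman diagram structure of type `(I,J)` on a finite set `E` (Definition 10 of
the paper): a splitting of `E` into `ū`- and `u`-labels, a splitting into internal and
external labels, a partition of the internal labels into `H`-vertices (one `ū`-leg and at
least two `u`-legs) and `Y`-vertices (a single `ū`-leg), and bijective labellings
`ρ_u : I → E_ext ∩ E_u`, `ρ_ū : J → E_ext ∩ E_ū` of the external legs. -/
structure PreFey (I J E : Type) [Fintype E] [DecidableEq E] where
  Eubar : Finset E
  Eu : Finset E
  Eint : Finset E
  Eext : Finset E
  piH : Finset (Finset E)
  piY : Finset (Finset E)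
  rho_u : I → E
  rho_ubar : J → E
  disj_ubar_u : Disjoint Eubar Eu
  union_ubar_u : Eubar ∪ Eu = Finset.univ
  disj_int_ext : Disjoint Eint Eext
  union_int_ext : Eint ∪ Eext = Finset.univ
  rho_u_mem : ∀ i, rho_u i ∈ Eext ∩ Eu
  rho_u_inj : Function.Injective rho_u
  rho_u_surj : ∀ x ∈ Eext ∩ Eu, ∃ i, rho_u i = x
  rho_ubar_mem : ∀ j, rho_ubar j ∈ Eext ∩ Eubar
  rho_ubar_inj : Function.Injective rho_ubar
  rho_ubar_surj : ∀ x ∈ Eext ∩ Eubar, ∃ j, rho_ubar j = x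
  disj_HY : Disjoint piH piY
  blocks_sub : ∀ B ∈ piH ∪ piY, B ⊆ Eint
  blocks_cover : ∀ x ∈ Eint, ∃! B, B ∈ piH ∪ piY ∧ x ∈ B
  H_vertex : ∀ B ∈ piH, (B ∩ Eubar).card = 1 ∧ 2 ≤ (B ∩ Eu).card
  Y_vertex : ∀ B ∈ piY, (B ∩ Eubar).card = 1 ∧ B ∩ Eu = ∅

/-- Transport of a pre-Feynman diagram structure along a bijection `σ : E ≃ E'`:
`IsTransportPre σ 𝓔 𝓔'` says that `𝓔'` is the componentwise image of `𝓔` under `σ`. -/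
def IsTransportPre {I J E E' : Type} [Fintype E] [DecidableEq E] [Fintype E']
    [DecidableEq E'] (σ : E ≃ E') (𝓔 : PreFey I J E) (𝓔' : PreFey I J E') : Prop :=
  𝓔'.Eubar = 𝓔.Eubar.image σ ∧ 𝓔'.Eu = 𝓔.Eu.image σ ∧
  𝓔'.Eint = 𝓔.Eint.image σ ∧ 𝓔'.Eext = 𝓔.Eext.image σ ∧
  𝓔'.piH = 𝓔.piH.image (fun B => B.image σ) ∧
  𝓔'.piY = 𝓔.piY.image (fun B => B.image σ) ∧
  𝓔'.rho_u = σ ∘ 𝓔.rho_u ∧ 𝓔'.rho_ubar = σ ∘ 𝓔.rho_ubar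

/-- The number of automorphisms of a pre-Feynman diagram structure, i.e. of bijections
`σ : E ≃ E` transporting the structure to itself. -/
def PreFey.autCard {I J E : Type} [Fintype E] [DecidableEq E] (𝓔 : PreFey I J E) : ℕ :=
  Nat.card {σ : E ≃ E // IsTransportPre σ 𝓔 𝓔}

/-- A Feynman diagram structure: a pre-Feynman diagram structure together with a
contraction scheme `𝓒`, a bijection from `E_ū` onto `E_u` (normalized to be the identity
outside `E_ū`). -/
structure Fey (I J E : Type) [Fintype E] [DecidableEq E] extends PreFey I J E where
  C : E → E
  C_off : ∀ x ∉ Eubar, C x = x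
  C_mem : ∀ x ∈ Eubar, C x ∈ Eu
  C_inj : Set.InjOn C ↑Eubar
  C_surj : ∀ y ∈ Eu, ∃ x ∈ Eubar, C x = y

/-- Transport of a Feynman diagram structure along a bijection. -/
def IsTransportFey {I J E E' : Type} [Fintype E] [DecidableEq E] [Fintype E']
    [DecidableEq E'] (σ : E ≃ E') (𝓕 : Fey I J E) (𝓕' : Fey I J E') : Prop :=
  IsTransportPre σ 𝓕.toPreFey 𝓕'.toPreFey ∧ 𝓕'.C = σ ∘ 𝓕.C ∘ σ.symm

/-- The number of automorphisms of a Feynman diagram structure. -/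
def Fey.autCard {I J E : Type} [Fintype E] [DecidableEq E] (𝓕 : Fey I J E) : ℕ :=
  Nat.card {σ : E ≃ E // IsTransportFey σ 𝓕 𝓕}

namespace PreFeyAux

open Finset

variable {I J E : Type} [Fintype E] [DecidableEq E] (𝓔 : PreFey I J E)

lemma mem_or (x : E) : x ∈ 𝓔.Eubar ∨ x ∈ 𝓔.Eu := by
  have : x ∈ 𝓔.Eubar ∪ 𝓔.Eu := by rw [𝓔.union_ubar_u]; exact mem_univ x
  exact mem_union.mp this

lemma not_u_of_ubar {x : E} (h : x ∈ 𝓔.Eubar) : x ∉ 𝓔.Eu :=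
  Finset.disjoint_left.mp 𝓔.disj_ubar_u h

lemma not_int_of_ext {x : E} (h : x ∈ 𝓔.Eext) : x ∉ 𝓔.Eint :=
  fun h' => Finset.disjoint_left.mp 𝓔.disj_int_ext h' h

lemma int_or_ext (x : E) : x ∈ 𝓔.Eint ∨ x ∈ 𝓔.Eext := by
  have : x ∈ 𝓔.Eint ∪ 𝓔.Eext := by rw [𝓔.union_int_ext]; exact mem_univ x
  exact mem_union.mp this

/-- the block of an internal point -/
def blk {x : E} (hx : x ∈ 𝓔.Eint) : Finset E := (𝓔.blocks_cover x hx).choose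

lemma blk_mem {x : E} (hx : x ∈ 𝓔.Eint) : blk 𝓔 hx ∈ 𝓔.piH ∪ 𝓔.piY :=
  (𝓔.blocks_cover x hx).choose_spec.1.1

lemma mem_blk {x : E} (hx : x ∈ 𝓔.Eint) : x ∈ blk 𝓔 hx :=
  (𝓔.blocks_cover x hx).choose_spec.1.2

lemma blk_eq {x : E} (hx : x ∈ 𝓔.Eint) {B : Finset E} (hB : B ∈ 𝓔.piH ∪ 𝓔.piY)
    (hxB : x ∈ B) : B = blk 𝓔 hx :=
  (𝓔.blocks_cover x hx).choose_spec.2 B ⟨hB, hxB⟩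

lemma block_unique {B B' : Finset E} (hB : B ∈ 𝓔.piH ∪ 𝓔.piY) (hB' : B' ∈ 𝓔.piH ∪ 𝓔.piY)
    {x : E} (hx : x ∈ B) (hx' : x ∈ B') : B = B' := by
  have hxi : x ∈ 𝓔.Eint := 𝓔.blocks_sub B hB hx
  rw [blk_eq 𝓔 hxi hB hx, blk_eq 𝓔 hxi hB' hx']

lemma Y_sub_ubar {B : Finset E} (hB : B ∈ 𝓔.piY) : B ⊆ 𝓔.Eubar := by
  intro y hy
  rcases mem_or 𝓔 y with h | h
  · exact h
  · exact absurd (mem_inter.mpr ⟨hy, h⟩) (by rw [(𝓔.Y_vertex B hB).2]; exact notMem_empty y)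

/-- the unique element of a Y-block -/
def yelt {B : Finset E} (hB : B ∈ 𝓔.piY) : E :=
  (Finset.card_eq_one.mp (𝓔.Y_vertex B hB).1).choose

lemma Y_block_eq {B : Finset E} (hB : B ∈ 𝓔.piY) : B = {yelt 𝓔 hB} := by
  have h1 : B ∩ 𝓔.Eubar = {yelt 𝓔 hB} := (Finset.card_eq_one.mp (𝓔.Y_vertex B hB).1).choose_spec
  rw [← h1, Finset.inter_eq_left.mpr (Y_sub_ubar 𝓔 hB)]

lemma yelt_mem {B : Finset E} (hB : B ∈ 𝓔.piY) : yelt 𝓔 hB ∈ B := by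
  have h1 : B ∩ 𝓔.Eubar = {yelt 𝓔 hB} := (Finset.card_eq_one.mp (𝓔.Y_vertex B hB).1).choose_spec
  have : yelt 𝓔 hB ∈ B ∩ 𝓔.Eubar := by rw [h1]; exact mem_singleton_self _
  exact (mem_inter.mp this).1

lemma yelt_ubar {B : Finset E} (hB : B ∈ 𝓔.piY) : yelt 𝓔 hB ∈ 𝓔.Eubar :=
  Y_sub_ubar 𝓔 hB (yelt_mem 𝓔 hB)

lemma Y_eq_singleton {B : Finset E} (hB : B ∈ 𝓔.piY) {x : E} (hx : x ∈ B) : B = {x} := by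
  have h := Y_block_eq 𝓔 hB
  rw [h] at hx
  rw [h, mem_singleton.mp hx]

/-- the unique ubar element of an H-block -/
def hub {B : Finset E} (hB : B ∈ 𝓔.piH) : E :=
  (Finset.card_eq_one.mp (𝓔.H_vertex B hB).1).choose

lemma hub_spec {B : Finset E} (hB : B ∈ 𝓔.piH) : B ∩ 𝓔.Eubar = {hub 𝓔 hB} :=
  (Finset.card_eq_one.mp (𝓔.H_vertex B hB).1).choose_spec

lemma hub_mem {B : Finset E} (hB : B ∈ 𝓔.piH) : hub 𝓔 hB ∈ B := by
  have : hub 𝓔 hB ∈ B ∩ 𝓔.Eubar := by rw [hub_spec 𝓔 hB]; exact mem_singleton_self _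
  exact (mem_inter.mp this).1

lemma hub_ubar {B : Finset E} (hB : B ∈ 𝓔.piH) : hub 𝓔 hB ∈ 𝓔.Eubar := by
  have : hub 𝓔 hB ∈ B ∩ 𝓔.Eubar := by rw [hub_spec 𝓔 hB]; exact mem_singleton_self _
  exact (mem_inter.mp this).2

lemma eq_hub {B : Finset E} (hB : B ∈ 𝓔.piH) {x : E} (hx : x ∈ B ∩ 𝓔.Eubar) :
    x = hub 𝓔 hB := by
  rw [hub_spec 𝓔 hB] at hx; exact mem_singleton.mp hx

lemma blk_mem_piH_of_u {x : E} (hx : x ∈ 𝓔.Eint) (hu : x ∈ 𝓔.Eu) : blk 𝓔 hx ∈ 𝓔.piH := by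
  rcases mem_union.mp (blk_mem 𝓔 hx) with h | h
  · exact h
  · exact absurd (mem_inter.mpr ⟨mem_blk 𝓔 hx, hu⟩)
      (by rw [(𝓔.Y_vertex _ h).2]; exact notMem_empty x)

lemma blk_mem_piY {x : E} (hx : x ∈ 𝓔.Eint) (hH : blk 𝓔 hx ∉ 𝓔.piH) : blk 𝓔 hx ∈ 𝓔.piY :=
  (mem_union.mp (blk_mem 𝓔 hx)).resolve_left hH

lemma card_split (s : Finset E) : s.card = (s ∩ 𝓔.Eubar).card + (s ∩ 𝓔.Eu).card := by
  rw [← Finset.card_union_of_disjoint (Finset.disjoint_of_subset_left (inter_subset_right)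
    (Finset.disjoint_of_subset_right (inter_subset_right) 𝓔.disj_ubar_u))]
  congr 1
  rw [← Finset.inter_union_distrib_left, 𝓔.union_ubar_u, Finset.inter_univ]

/-! transport lemmas -/

set_option linter.unusedSectionVars false

lemma map_mem {σ : E ≃ E} {s : Finset E} (hs : s = s.image σ) {x : E} (hx : x ∈ s) :
    σ x ∈ s := by
  rw [hs]; exact Finset.mem_image_of_mem σ hx

lemma fix_ext {σ : E ≃ E} (hσ : IsTransportPre σ 𝓔 𝓔) {x : E} (hx : x ∈ 𝓔.Eext) :
    σ x = x := by
  rcases mem_or 𝓔 x with h | h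
  · obtain ⟨j, hj⟩ := 𝓔.rho_ubar_surj x (mem_inter.mpr ⟨hx, h⟩)
    have := congrFun hσ.2.2.2.2.2.2.2 j
    simp only [Function.comp_apply] at this
    rw [hj] at this
    exact this.symm
  · obtain ⟨i, hi⟩ := 𝓔.rho_u_surj x (mem_inter.mpr ⟨hx, h⟩)
    have := congrFun hσ.2.2.2.2.2.2.1 i
    simp only [Function.comp_apply] at this
    rw [hi] at this
    exact this.symm

lemma image_symm_image (σ : E ≃ E) (s : Finset E) : (s.image σ).image σ.symm = s := by
  rw [Finset.image_image, Equiv.symm_comp_self, Finset.image_id]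

lemma image_image_symm (σ : E ≃ E) (s : Finset E) : (s.image σ.symm).image σ = s := by
  rw [Finset.image_image, Equiv.self_comp_symm, Finset.image_id]

lemma mem_piH_image {σ : E ≃ E} (hσ : IsTransportPre σ 𝓔 𝓔) {B : Finset E}
    (hB : B ∈ 𝓔.piH) : B.image σ ∈ 𝓔.piH := by
  rw [hσ.2.2.2.2.1]
  exact Finset.mem_image_of_mem _ hB

lemma mem_piH_image_symm {σ : E ≃ E} (hσ : IsTransportPre σ 𝓔 𝓔) {B : Finset E}
    (hB : B ∈ 𝓔.piH) : B.image σ.symm ∈ 𝓔.piH := by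
  rw [hσ.2.2.2.2.1] at hB
  obtain ⟨C, hC, rfl⟩ := Finset.mem_image.mp hB
  rw [image_symm_image]
  exact hC

lemma mem_piY_image {σ : E ≃ E} (hσ : IsTransportPre σ 𝓔 𝓔) {B : Finset E}
    (hB : B ∈ 𝓔.piY) : B.image σ ∈ 𝓔.piY := by
  rw [hσ.2.2.2.2.2.1]
  exact Finset.mem_image_of_mem _ hB

lemma mem_piY_image_symm {σ : E ≃ E} (hσ : IsTransportPre σ 𝓔 𝓔) {B : Finset E}
    (hB : B ∈ 𝓔.piY) : B.image σ.symm ∈ 𝓔.piY := by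
  rw [hσ.2.2.2.2.2.1] at hB
  obtain ⟨C, hC, rfl⟩ := Finset.mem_image.mp hB
  rw [image_symm_image]
  exact hC

lemma image_inter_eq (σ : E ≃ E) (s : Finset E) {t : Finset E} (ht : t = t.image σ) :
    (s.image σ) ∩ t = (s ∩ t).image σ := by
  conv_lhs => rw [ht]
  rw [← Finset.image_inter _ _ σ.injective]

/-- The combinatorial data of an automorphism. -/
structure Dat (𝓔 : PreFey I J E) where
  tH : Equiv.Perm {B // B ∈ 𝓔.piH}
  tY : Equiv.Perm {B // B ∈ 𝓔.piY}
  g : E → E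
  htH : ∀ B : {B // B ∈ 𝓔.piH},
    (((tH B : Finset E)) ∩ 𝓔.Eu).card = ((B : Finset E) ∩ 𝓔.Eu).card
  hg_out : ∀ x, x ∉ 𝓔.Eint ∩ 𝓔.Eu → g x = x
  hg_mem : ∀ (B : {B // B ∈ 𝓔.piH}) (x : E),
    x ∈ (B : Finset E) ∩ 𝓔.Eu → g x ∈ ((tH B : Finset E)) ∩ 𝓔.Eu
  hg_inj : Set.InjOn g ↑(𝓔.Eint ∩ 𝓔.Eu)

lemma Dat.ext' {d d' : Dat 𝓔} (h1 : d.tH = d'.tH) (h2 : d.tY = d'.tY) (h3 : d.g = d'.g) :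
    d = d' := by
  cases d; cases d'
  cases h1; cases h2; cases h3
  rfl

def tHof {σ : E ≃ E} (hσ : IsTransportPre σ 𝓔 𝓔) : Equiv.Perm {B // B ∈ 𝓔.piH} where
  toFun := fun B => ⟨(B : Finset E).image σ, mem_piH_image 𝓔 hσ B.2⟩
  invFun := fun B => ⟨(B : Finset E).image σ.symm, mem_piH_image_symm 𝓔 hσ B.2⟩
  left_inv := fun B => Subtype.ext (image_symm_image σ _)
  right_inv := fun B => Subtype.ext (image_image_symm σ _)

def tYof {σ : E ≃ E} (hσ : IsTransportPre σ 𝓔 𝓔) : Equiv.Perm {B // B ∈ 𝓔.piY} where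
  toFun := fun B => ⟨(B : Finset E).image σ, mem_piY_image 𝓔 hσ B.2⟩
  invFun := fun B => ⟨(B : Finset E).image σ.symm, mem_piY_image_symm 𝓔 hσ B.2⟩
  left_inv := fun B => Subtype.ext (image_symm_image σ _)
  right_inv := fun B => Subtype.ext (image_image_symm σ _)

lemma tHof_apply {σ : E ≃ E} (hσ : IsTransportPre σ 𝓔 𝓔) (B : {B // B ∈ 𝓔.piH}) :
    ((tHof 𝓔 hσ B : {B // B ∈ 𝓔.piH}) : Finset E) = (B : Finset E).image σ := rfl

lemma tYof_apply {σ : E ≃ E} (hσ : IsTransportPre σ 𝓔 𝓔) (B : {B // B ∈ 𝓔.piY}) :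
    ((tYof 𝓔 hσ B : {B // B ∈ 𝓔.piY}) : Finset E) = (B : Finset E).image σ := rfl

def gof (σ : E ≃ E) : E → E := fun x => if x ∈ 𝓔.Eint ∩ 𝓔.Eu then σ x else x

lemma gof_pos {σ : E ≃ E} {x : E} (hx : x ∈ 𝓔.Eint ∩ 𝓔.Eu) : gof 𝓔 σ x = σ x :=
  if_pos hx

/-- The forward map from automorphisms to data. -/
def F (σ : E ≃ E) (hσ : IsTransportPre σ 𝓔 𝓔) : Dat 𝓔 where
  tH := tHof 𝓔 hσ
  tY := tYof 𝓔 hσ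
  g := gof 𝓔 σ
  htH := fun B => by
    rw [tHof_apply, image_inter_eq σ _ hσ.2.1,
      Finset.card_image_of_injective _ σ.injective]
  hg_out := fun x hx => if_neg hx
  hg_mem := fun B x hx => by
    have hxB : x ∈ (B : Finset E) := (Finset.mem_inter.mp hx).1
    have hxu : x ∈ 𝓔.Eu := (Finset.mem_inter.mp hx).2
    have hxi : x ∈ 𝓔.Eint := 𝓔.blocks_sub _ (Finset.mem_union_left _ B.2) hxB
    rw [gof_pos 𝓔 (Finset.mem_inter.mpr ⟨hxi, hxu⟩), tHof_apply]
    exact Finset.mem_inter.mpr ⟨Finset.mem_image_of_mem σ hxB, map_mem hσ.2.1 hxu⟩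
  hg_inj := fun x hx y hy h => by
    simp only [Finset.coe_inter, Set.mem_inter_iff, Finset.mem_coe] at hx hy
    rw [gof_pos 𝓔 (Finset.mem_inter.mpr ⟨hx.1, hx.2⟩),
      gof_pos 𝓔 (Finset.mem_inter.mpr ⟨hy.1, hy.2⟩)] at h
    exact σ.injective h

lemma card_one_eq {s : Finset E} (hs : s.card = 1) {a b : E} (ha : a ∈ s) (hb : b ∈ s) :
    a = b :=
  Finset.card_le_one.mp (le_of_eq hs) a ha b hb

lemma F_injective (σ σ' : E ≃ E) (hσ : IsTransportPre σ 𝓔 𝓔)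
    (hσ' : IsTransportPre σ' 𝓔 𝓔) (h : F 𝓔 σ hσ = F 𝓔 σ' hσ') : σ = σ' := by
  have htH : tHof 𝓔 hσ = tHof 𝓔 hσ' := congrArg Dat.tH h
  have htY : tYof 𝓔 hσ = tYof 𝓔 hσ' := congrArg Dat.tY h
  have hg : gof 𝓔 σ = gof 𝓔 σ' := congrArg Dat.g h
  apply Equiv.ext
  intro x
  rcases int_or_ext 𝓔 x with hx | hx
  · -- internal
    have hxblk := mem_blk 𝓔 hx
    rcases Finset.mem_union.mp (blk_mem 𝓔 hx) with hBH | hBY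
    · rcases mem_or 𝓔 x with hub' | hu
      · -- x in Eubar: use tH equality
        have himg : (blk 𝓔 hx).image σ = (blk 𝓔 hx).image σ' := by
          have h2 := congrArg (fun e => ((e ⟨blk 𝓔 hx, hBH⟩ : {B // B ∈ 𝓔.piH}) : Finset E))
            (congrArg Equiv.toFun htH)
          simpa [tHof] using h2
        have hcard : (((blk 𝓔 hx).image σ) ∩ 𝓔.Eubar).card = 1 := by
          rw [image_inter_eq σ _ hσ.1, Finset.card_image_of_injective _ σ.injective]
          exact (𝓔.H_vertex _ hBH).1
        have h1 : σ x ∈ ((blk 𝓔 hx).image σ) ∩ 𝓔.Eubar :=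
          Finset.mem_inter.mpr ⟨Finset.mem_image_of_mem σ hxblk, map_mem hσ.1 hub'⟩
        have h2 : σ' x ∈ ((blk 𝓔 hx).image σ) ∩ 𝓔.Eubar := by
          rw [himg]
          exact Finset.mem_inter.mpr ⟨Finset.mem_image_of_mem σ' hxblk, map_mem hσ'.1 hub'⟩
        exact card_one_eq hcard h1 h2
      · -- x in Eu: use g equality
        have := congrFun hg x
        rwa [gof_pos 𝓔 (Finset.mem_inter.mpr ⟨hx, hu⟩),
          gof_pos 𝓔 (Finset.mem_inter.mpr ⟨hx, hu⟩)] at this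
    · -- Y block
      have hsing := Y_eq_singleton 𝓔 hBY hxblk
      have himg : (blk 𝓔 hx).image σ = (blk 𝓔 hx).image σ' := by
        have h2 := congrArg (fun e => ((e ⟨blk 𝓔 hx, hBY⟩ : {B // B ∈ 𝓔.piY}) : Finset E))
          (congrArg Equiv.toFun htY)
        simpa [tYof] using h2
      rw [hsing, Finset.image_singleton, Finset.image_singleton] at himg
      exact Finset.singleton_injective himg
  · rw [fix_ext 𝓔 hσ hx, fix_ext 𝓔 hσ' hx]


/-! construction of an automorphism from data -/

/-- the candidate automorphism built from data `d` -/
def sfun (d : Dat 𝓔) (x : E) : E :=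
  if hx : x ∈ 𝓔.Eint then
    if hB : blk 𝓔 hx ∈ 𝓔.piH then
      if x ∈ 𝓔.Eu then d.g x
      else hub 𝓔 (d.tH ⟨blk 𝓔 hx, hB⟩).2
    else yelt 𝓔 (d.tY ⟨blk 𝓔 hx, blk_mem_piY 𝓔 hx hB⟩).2
  else x

lemma sfun_ext (d : Dat 𝓔) {x : E} (hx : x ∉ 𝓔.Eint) : sfun 𝓔 d x = x := dif_neg hx

lemma sfun_Hu (d : Dat 𝓔) {x : E} (hx : x ∈ 𝓔.Eint) (hB : blk 𝓔 hx ∈ 𝓔.piH)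
    (hu : x ∈ 𝓔.Eu) : sfun 𝓔 d x = d.g x := by
  rw [sfun, dif_pos hx, dif_pos hB, if_pos hu]

lemma sfun_Hubar (d : Dat 𝓔) {x : E} (hx : x ∈ 𝓔.Eint) (hB : blk 𝓔 hx ∈ 𝓔.piH)
    (hu : x ∉ 𝓔.Eu) : sfun 𝓔 d x = hub 𝓔 (d.tH ⟨blk 𝓔 hx, hB⟩).2 := by
  rw [sfun, dif_pos hx, dif_pos hB, if_neg hu]

lemma sfun_Y (d : Dat 𝓔) {x : E} (hx : x ∈ 𝓔.Eint) (hB : blk 𝓔 hx ∉ 𝓔.piH) :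
    sfun 𝓔 d x = yelt 𝓔 (d.tY ⟨blk 𝓔 hx, blk_mem_piY 𝓔 hx hB⟩).2 := by
  rw [sfun, dif_pos hx, dif_neg hB]

lemma tH_congr (d : Dat 𝓔) {B B' : {B // B ∈ 𝓔.piH}} (h : (B : Finset E) = (B' : Finset E)) :
    d.tH B = d.tH B' := congrArg d.tH (Subtype.ext h)

/-- where the image lands, H-u case -/
lemma sfun_Hu_mem (d : Dat 𝓔) {x : E} (hx : x ∈ 𝓔.Eint) (hB : blk 𝓔 hx ∈ 𝓔.piH)
    (hu : x ∈ 𝓔.Eu) : sfun 𝓔 d x ∈ ((d.tH ⟨blk 𝓔 hx, hB⟩ : Finset E)) ∩ 𝓔.Eu := by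
  rw [sfun_Hu 𝓔 d hx hB hu]
  exact d.hg_mem _ x (Finset.mem_inter.mpr ⟨mem_blk 𝓔 hx, hu⟩)

lemma sfun_inj (d : Dat 𝓔) : Function.Injective (sfun 𝓔 d) := by
  intro x y h
  -- first: membership in Eint is preserved / reflected
  have land : ∀ z : E, (hz : z ∈ 𝓔.Eint) → sfun 𝓔 d z ∈ 𝓔.Eint := by
    intro z hz
    by_cases hB : blk 𝓔 hz ∈ 𝓔.piH
    · by_cases hu : z ∈ 𝓔.Eu
      · have := sfun_Hu_mem 𝓔 d hz hB hu
        exact 𝓔.blocks_sub _ (Finset.mem_union_left _ (d.tH ⟨blk 𝓔 hz, hB⟩).2)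
          (Finset.mem_inter.mp this).1
      · rw [sfun_Hubar 𝓔 d hz hB hu]
        exact 𝓔.blocks_sub _ (Finset.mem_union_left _ (d.tH ⟨blk 𝓔 hz, hB⟩).2)
          (hub_mem 𝓔 (d.tH ⟨blk 𝓔 hz, hB⟩).2)
    · rw [sfun_Y 𝓔 d hz hB]
      exact 𝓔.blocks_sub _ (Finset.mem_union_right _
        (d.tY ⟨blk 𝓔 hz, blk_mem_piY 𝓔 hz hB⟩).2)
        (yelt_mem 𝓔 (d.tY ⟨blk 𝓔 hz, blk_mem_piY 𝓔 hz hB⟩).2)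
  by_cases hx : x ∈ 𝓔.Eint <;> by_cases hy : y ∈ 𝓔.Eint
  · -- both internal
    by_cases hBx : blk 𝓔 hx ∈ 𝓔.piH <;> by_cases hBy : blk 𝓔 hy ∈ 𝓔.piH
    · -- both H
      by_cases hux : x ∈ 𝓔.Eu <;> by_cases huy : y ∈ 𝓔.Eu
      · rw [sfun_Hu 𝓔 d hx hBx hux, sfun_Hu 𝓔 d hy hBy huy] at h
        exact d.hg_inj (by simpa using ⟨hx, hux⟩) (by simpa using ⟨hy, huy⟩) h
      · -- x u-leg, y ubar-leg : contradiction
        exfalso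
        have h1 : sfun 𝓔 d x ∈ 𝓔.Eu := (Finset.mem_inter.mp (sfun_Hu_mem 𝓔 d hx hBx hux)).2
        have h2 : sfun 𝓔 d y ∈ 𝓔.Eubar := by
          rw [sfun_Hubar 𝓔 d hy hBy huy]; exact hub_ubar 𝓔 _
        rw [h] at h1
        exact not_u_of_ubar 𝓔 h2 h1
      · exfalso
        have h1 : sfun 𝓔 d y ∈ 𝓔.Eu := (Finset.mem_inter.mp (sfun_Hu_mem 𝓔 d hy hBy huy)).2
        have h2 : sfun 𝓔 d x ∈ 𝓔.Eubar := by
          rw [sfun_Hubar 𝓔 d hx hBx hux]; exact hub_ubar 𝓔 _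
        rw [← h] at h1
        exact not_u_of_ubar 𝓔 h2 h1
      · -- both ubar legs of H-blocks
        rw [sfun_Hubar 𝓔 d hx hBx hux, sfun_Hubar 𝓔 d hy hBy huy] at h
        have hBeq : ((d.tH ⟨blk 𝓔 hx, hBx⟩ : Finset E)) = ((d.tH ⟨blk 𝓔 hy, hBy⟩ : Finset E)) := by
          apply block_unique 𝓔 (Finset.mem_union_left _ (d.tH ⟨blk 𝓔 hx, hBx⟩).2)
            (Finset.mem_union_left _ (d.tH ⟨blk 𝓔 hy, hBy⟩).2)
            (hub_mem 𝓔 (d.tH ⟨blk 𝓔 hx, hBx⟩).2)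
          rw [h]
          exact hub_mem 𝓔 (d.tH ⟨blk 𝓔 hy, hBy⟩).2
        have : blk 𝓔 hx = blk 𝓔 hy := by
          have := d.tH.injective (Subtype.ext hBeq)
          exact congrArg Subtype.val this
        have hxu : x ∈ blk 𝓔 hx ∩ 𝓔.Eubar := Finset.mem_inter.mpr
          ⟨mem_blk 𝓔 hx, (mem_or 𝓔 x).resolve_right hux⟩
        have hyu : y ∈ blk 𝓔 hx ∩ 𝓔.Eubar := by
          rw [this]
          exact Finset.mem_inter.mpr ⟨mem_blk 𝓔 hy, (mem_or 𝓔 y).resolve_right huy⟩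
        exact card_one_eq (𝓔.H_vertex _ hBx).1 hxu hyu
    · -- x in H, y in Y : contradiction
      exfalso
      have hsy := sfun_Y 𝓔 d hy hBy
      have h2 : sfun 𝓔 d y ∈ ((d.tY ⟨blk 𝓔 hy, blk_mem_piY 𝓔 hy hBy⟩ : Finset E)) := by
        rw [hsy]; exact yelt_mem 𝓔 _
      have h1 : sfun 𝓔 d x ∈ ((d.tH ⟨blk 𝓔 hx, hBx⟩ : Finset E)) ∨
          sfun 𝓔 d x ∈ ((d.tH ⟨blk 𝓔 hx, hBx⟩ : Finset E)) := by
        by_cases hux : x ∈ 𝓔.Eu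
        · exact Or.inl (Finset.mem_inter.mp (sfun_Hu_mem 𝓔 d hx hBx hux)).1
        · rw [sfun_Hubar 𝓔 d hx hBx hux]; exact Or.inl (hub_mem 𝓔 _)
      have h1' := h1.elim id id
      rw [h] at h1'
      have hBeq := block_unique 𝓔
        (Finset.mem_union_left _ (d.tH ⟨blk 𝓔 hx, hBx⟩).2)
        (Finset.mem_union_right _ (d.tY ⟨blk 𝓔 hy, blk_mem_piY 𝓔 hy hBy⟩).2) h1' h2
      have := (d.tH ⟨blk 𝓔 hx, hBx⟩).2
      rw [hBeq] at this
      exact Finset.disjoint_left.mp 𝓔.disj_HY this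
        (d.tY ⟨blk 𝓔 hy, blk_mem_piY 𝓔 hy hBy⟩).2
    · -- x in Y, y in H : symmetric
      exfalso
      have hsx := sfun_Y 𝓔 d hx hBx
      have h2 : sfun 𝓔 d x ∈ ((d.tY ⟨blk 𝓔 hx, blk_mem_piY 𝓔 hx hBx⟩ : Finset E)) := by
        rw [hsx]; exact yelt_mem 𝓔 _
      have h1 : sfun 𝓔 d y ∈ ((d.tH ⟨blk 𝓔 hy, hBy⟩ : Finset E)) := by
        by_cases huy : y ∈ 𝓔.Eu
        · exact (Finset.mem_inter.mp (sfun_Hu_mem 𝓔 d hy hBy huy)).1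
        · rw [sfun_Hubar 𝓔 d hy hBy huy]; exact hub_mem 𝓔 _
      rw [← h] at h1
      have hBeq := block_unique 𝓔
        (Finset.mem_union_left _ (d.tH ⟨blk 𝓔 hy, hBy⟩).2)
        (Finset.mem_union_right _ (d.tY ⟨blk 𝓔 hx, blk_mem_piY 𝓔 hx hBx⟩).2) h1 h2
      have := (d.tH ⟨blk 𝓔 hy, hBy⟩).2
      rw [hBeq] at this
      exact Finset.disjoint_left.mp 𝓔.disj_HY this
        (d.tY ⟨blk 𝓔 hx, blk_mem_piY 𝓔 hx hBx⟩).2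
    · -- both Y
      rw [sfun_Y 𝓔 d hx hBx, sfun_Y 𝓔 d hy hBy] at h
      have hBeq : ((d.tY ⟨blk 𝓔 hx, blk_mem_piY 𝓔 hx hBx⟩ : Finset E)) =
          ((d.tY ⟨blk 𝓔 hy, blk_mem_piY 𝓔 hy hBy⟩ : Finset E)) := by
        apply block_unique 𝓔
          (Finset.mem_union_right _ (d.tY ⟨blk 𝓔 hx, blk_mem_piY 𝓔 hx hBx⟩).2)
          (Finset.mem_union_right _ (d.tY ⟨blk 𝓔 hy, blk_mem_piY 𝓔 hy hBy⟩).2)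
          (yelt_mem 𝓔 _)
        rw [h]
        exact yelt_mem 𝓔 _
      have hblkeq : blk 𝓔 hx = blk 𝓔 hy :=
        congrArg Subtype.val (d.tY.injective (Subtype.ext hBeq))
      have h1 := Y_eq_singleton 𝓔 (blk_mem_piY 𝓔 hx hBx) (mem_blk 𝓔 hx)
      have h2 := Y_eq_singleton 𝓔 (blk_mem_piY 𝓔 hy hBy) (mem_blk 𝓔 hy)
      rw [hblkeq, h2] at h1
      exact (Finset.singleton_injective h1.symm)
  · exfalso
    have h1 := land x hx
    rw [h, sfun_ext 𝓔 d hy] at h1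
    exact hy h1
  · exfalso
    have h1 := land y hy
    rw [← h, sfun_ext 𝓔 d hx] at h1
    exact hx h1
  · rw [sfun_ext 𝓔 d hx, sfun_ext 𝓔 d hy] at h
    exact h


/-! the constructed map is an automorphism inducing the given data -/

def sEquiv (d : Dat 𝓔) : E ≃ E :=
  Equiv.ofBijective (sfun 𝓔 d) (Finite.injective_iff_bijective.mp (sfun_inj 𝓔 d))

lemma sEquiv_coe (d : Dat 𝓔) : ⇑(sEquiv 𝓔 d) = sfun 𝓔 d := rfl

lemma sfun_maps_int (d : Dat 𝓔) {z : E} (hz : z ∈ 𝓔.Eint) : sfun 𝓔 d z ∈ 𝓔.Eint := by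
  by_cases hB : blk 𝓔 hz ∈ 𝓔.piH
  · by_cases hu : z ∈ 𝓔.Eu
    · exact 𝓔.blocks_sub _ (Finset.mem_union_left _ (d.tH ⟨blk 𝓔 hz, hB⟩).2)
        (Finset.mem_inter.mp (sfun_Hu_mem 𝓔 d hz hB hu)).1
    · rw [sfun_Hubar 𝓔 d hz hB hu]
      exact 𝓔.blocks_sub _ (Finset.mem_union_left _ (d.tH ⟨blk 𝓔 hz, hB⟩).2)
        (hub_mem 𝓔 (d.tH ⟨blk 𝓔 hz, hB⟩).2)
  · rw [sfun_Y 𝓔 d hz hB]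
    exact 𝓔.blocks_sub _ (Finset.mem_union_right _
      (d.tY ⟨blk 𝓔 hz, blk_mem_piY 𝓔 hz hB⟩).2)
      (yelt_mem 𝓔 (d.tY ⟨blk 𝓔 hz, blk_mem_piY 𝓔 hz hB⟩).2)

lemma sfun_maps_ubar (d : Dat 𝓔) {z : E} (hz : z ∈ 𝓔.Eubar) : sfun 𝓔 d z ∈ 𝓔.Eubar := by
  by_cases hzi : z ∈ 𝓔.Eint
  · have hu : z ∉ 𝓔.Eu := not_u_of_ubar 𝓔 hz
    by_cases hB : blk 𝓔 hzi ∈ 𝓔.piH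
    · rw [sfun_Hubar 𝓔 d hzi hB hu]
      exact hub_ubar 𝓔 _
    · rw [sfun_Y 𝓔 d hzi hB]
      exact yelt_ubar 𝓔 _
  · rw [sfun_ext 𝓔 d hzi]; exact hz

lemma sfun_maps_u (d : Dat 𝓔) {z : E} (hz : z ∈ 𝓔.Eu) : sfun 𝓔 d z ∈ 𝓔.Eu := by
  by_cases hzi : z ∈ 𝓔.Eint
  · have hB : blk 𝓔 hzi ∈ 𝓔.piH := blk_mem_piH_of_u 𝓔 hzi hz
    exact (Finset.mem_inter.mp (sfun_Hu_mem 𝓔 d hzi hB hz)).2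
  · rw [sfun_ext 𝓔 d hzi]; exact hz

lemma sfun_maps_ext (d : Dat 𝓔) {z : E} (hz : z ∈ 𝓔.Eext) : sfun 𝓔 d z = z :=
  sfun_ext 𝓔 d (not_int_of_ext 𝓔 hz)

lemma image_eq_of_mapsto {f : E → E} (hf : Function.Injective f) {s : Finset E}
    (h : ∀ x ∈ s, f x ∈ s) : s = s.image f := by
  refine (Finset.eq_of_subset_of_card_le ?_ ?_).symm
  · intro y hy
    obtain ⟨x, hx, rfl⟩ := Finset.mem_image.mp hy
    exact h x hx
  · rw [Finset.card_image_of_injective _ hf]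

lemma blockH_image (d : Dat 𝓔) {B : Finset E} (hB : B ∈ 𝓔.piH) :
    B.image (sfun 𝓔 d) = ((d.tH ⟨B, hB⟩ : Finset E)) := by
  apply Finset.eq_of_subset_of_card_le
  · intro y hy
    obtain ⟨x, hx, rfl⟩ := Finset.mem_image.mp hy
    have hxi : x ∈ 𝓔.Eint := 𝓔.blocks_sub _ (Finset.mem_union_left _ hB) hx
    have hblk : blk 𝓔 hxi = B := (blk_eq 𝓔 hxi (Finset.mem_union_left _ hB) hx).symm
    have hBH : blk 𝓔 hxi ∈ 𝓔.piH := by rw [hblk]; exact hB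
    have hsub : (⟨blk 𝓔 hxi, hBH⟩ : {B // B ∈ 𝓔.piH}) = ⟨B, hB⟩ := Subtype.ext hblk
    by_cases hu : x ∈ 𝓔.Eu
    · have := (Finset.mem_inter.mp (sfun_Hu_mem 𝓔 d hxi hBH hu)).1
      rwa [hsub] at this
    · rw [sfun_Hubar 𝓔 d hxi hBH hu, hsub]
      exact hub_mem 𝓔 _
  · have h1 : ((d.tH ⟨B, hB⟩ : Finset E)).card = B.card := by
      rw [card_split 𝓔 ((d.tH ⟨B, hB⟩ : Finset E)), card_split 𝓔 B,
        (𝓔.H_vertex _ (d.tH ⟨B, hB⟩).2).1, (𝓔.H_vertex _ hB).1, d.htH ⟨B, hB⟩]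
    rw [h1, Finset.card_image_of_injective _ (sfun_inj 𝓔 d)]

lemma blockY_image (d : Dat 𝓔) {B : Finset E} (hB : B ∈ 𝓔.piY) :
    B.image (sfun 𝓔 d) = ((d.tY ⟨B, hB⟩ : Finset E)) := by
  have hy := yelt_mem 𝓔 hB
  have hxi : yelt 𝓔 hB ∈ 𝓔.Eint := 𝓔.blocks_sub _ (Finset.mem_union_right _ hB) hy
  have hblk : blk 𝓔 hxi = B := (blk_eq 𝓔 hxi (Finset.mem_union_right _ hB) hy).symm
  have hBH : blk 𝓔 hxi ∉ 𝓔.piH := by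
    rw [hblk]
    exact fun hc => Finset.disjoint_left.mp 𝓔.disj_HY hc hB
  have hsub : (⟨blk 𝓔 hxi, blk_mem_piY 𝓔 hxi hBH⟩ : {B // B ∈ 𝓔.piY}) = ⟨B, hB⟩ :=
    Subtype.ext hblk
  have hs : sfun 𝓔 d (yelt 𝓔 hB) = yelt 𝓔 (d.tY ⟨B, hB⟩).2 := by
    rw [sfun_Y 𝓔 d hxi hBH, hsub]
  conv_lhs => rw [Y_block_eq 𝓔 hB]
  rw [Finset.image_singleton, hs, ← Y_block_eq 𝓔 (d.tY ⟨B, hB⟩).2]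

lemma sEquiv_transport (d : Dat 𝓔) : IsTransportPre (sEquiv 𝓔 d) 𝓔 𝓔 := by
  have hcoe : ⇑(sEquiv 𝓔 d) = sfun 𝓔 d := rfl
  have hinj := sfun_inj 𝓔 d
  refine ⟨?_, ?_, ?_, ?_, ?_, ?_, ?_, ?_⟩
  · rw [hcoe]; exact image_eq_of_mapsto hinj (fun x hx => sfun_maps_ubar 𝓔 d hx)
  · rw [hcoe]; exact image_eq_of_mapsto hinj (fun x hx => sfun_maps_u 𝓔 d hx)
  · rw [hcoe]; exact image_eq_of_mapsto hinj (fun x hx => sfun_maps_int 𝓔 d hx)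
  · rw [hcoe]
    exact image_eq_of_mapsto hinj (fun x hx => by rw [sfun_maps_ext 𝓔 d hx]; exact hx)
  · rw [hcoe]
    refine (Finset.eq_of_subset_of_card_le ?_ ?_).symm
    · intro C hC
      obtain ⟨B, hB, rfl⟩ := Finset.mem_image.mp hC
      rw [blockH_image 𝓔 d hB]
      exact (d.tH ⟨B, hB⟩).2
    · rw [Finset.card_image_of_injOn]
      intro B1 h1 B2 h2 heq
      simp only at heq
      rw [blockH_image 𝓔 d (Finset.mem_coe.mp h1), blockH_image 𝓔 d (Finset.mem_coe.mp h2)]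
        at heq
      exact congrArg Subtype.val (d.tH.injective (Subtype.ext heq))
  · rw [hcoe]
    refine (Finset.eq_of_subset_of_card_le ?_ ?_).symm
    · intro C hC
      obtain ⟨B, hB, rfl⟩ := Finset.mem_image.mp hC
      rw [blockY_image 𝓔 d hB]
      exact (d.tY ⟨B, hB⟩).2
    · rw [Finset.card_image_of_injOn]
      intro B1 h1 B2 h2 heq
      simp only at heq
      rw [blockY_image 𝓔 d (Finset.mem_coe.mp h1), blockY_image 𝓔 d (Finset.mem_coe.mp h2)]
        at heq
      exact congrArg Subtype.val (d.tY.injective (Subtype.ext heq))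
  · funext i
    simp only [Function.comp_apply, hcoe]
    exact (sfun_maps_ext 𝓔 d ((Finset.mem_inter.mp (𝓔.rho_u_mem i)).1)).symm
  · funext j
    simp only [Function.comp_apply, hcoe]
    exact (sfun_maps_ext 𝓔 d ((Finset.mem_inter.mp (𝓔.rho_ubar_mem j)).1)).symm

lemma F_surjective (d : Dat 𝓔) : F 𝓔 (sEquiv 𝓔 d) (sEquiv_transport 𝓔 d) = d := by
  apply Dat.ext' 𝓔
  · apply Equiv.ext
    intro B
    apply Subtype.ext
    show ((B : Finset E)).image (sEquiv 𝓔 d) = ((d.tH B : Finset E))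
    rw [sEquiv_coe, blockH_image 𝓔 d B.2]
  · apply Equiv.ext
    intro B
    apply Subtype.ext
    show ((B : Finset E)).image (sEquiv 𝓔 d) = ((d.tY B : Finset E))
    rw [sEquiv_coe, blockY_image 𝓔 d B.2]
  · funext x
    show gof 𝓔 (sEquiv 𝓔 d) x = d.g x
    by_cases hx : x ∈ 𝓔.Eint ∩ 𝓔.Eu
    · rw [gof_pos 𝓔 hx, sEquiv_coe]
      have hxi := (Finset.mem_inter.mp hx).1
      have hxu := (Finset.mem_inter.mp hx).2
      rw [sfun_Hu 𝓔 d hxi (blk_mem_piH_of_u 𝓔 hxi hxu) hxu]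
    · rw [d.hg_out x hx]
      exact if_neg hx


/-! ### Counting the data -/

abbrev TS (𝓔 : PreFey I J E) :=
  {τ : Equiv.Perm {B // B ∈ 𝓔.piH} //
    ∀ B, ((τ B : Finset E) ∩ 𝓔.Eu).card = ((B : Finset E) ∩ 𝓔.Eu).card}

def GsCond (τ : Equiv.Perm {B // B ∈ 𝓔.piH}) (g : E → E) : Prop :=
  (∀ x, x ∉ 𝓔.Eint ∩ 𝓔.Eu → g x = x) ∧
  (∀ (B : {B // B ∈ 𝓔.piH}) (x : E), x ∈ (B : Finset E) ∩ 𝓔.Eu →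
    g x ∈ ((τ B : Finset E)) ∩ 𝓔.Eu) ∧
  Set.InjOn g ↑(𝓔.Eint ∩ 𝓔.Eu)

abbrev GS (τ : Equiv.Perm {B // B ∈ 𝓔.piH}) := {g : E → E // GsCond 𝓔 τ g}

def datEquiv : Dat 𝓔 ≃ Σ τ : TS 𝓔, (GS 𝓔 τ.1 × Equiv.Perm {B // B ∈ 𝓔.piY}) where
  toFun d := ⟨⟨d.tH, d.htH⟩, ⟨⟨d.g, d.hg_out, d.hg_mem, d.hg_inj⟩, d.tY⟩⟩
  invFun s := ⟨s.1.1, s.2.2, s.2.1.1, s.1.2, s.2.1.2.1, s.2.1.2.2.1, s.2.1.2.2.2⟩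
  left_inv d := rfl
  right_inv s := rfl

/-- the H-block of an internal u-element -/
def blkHu {x : E} (hx : x ∈ 𝓔.Eint ∩ 𝓔.Eu) : {B // B ∈ 𝓔.piH} :=
  ⟨blk 𝓔 (Finset.mem_inter.mp hx).1,
    blk_mem_piH_of_u 𝓔 (Finset.mem_inter.mp hx).1 (Finset.mem_inter.mp hx).2⟩

lemma mem_blkHu {x : E} (hx : x ∈ 𝓔.Eint ∩ 𝓔.Eu) :
    x ∈ ((blkHu 𝓔 hx : Finset E)) ∩ 𝓔.Eu :=
  Finset.mem_inter.mpr ⟨mem_blk 𝓔 (Finset.mem_inter.mp hx).1, (Finset.mem_inter.mp hx).2⟩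

lemma blkHu_eq {x : E} (hx : x ∈ 𝓔.Eint ∩ 𝓔.Eu) {B : {B // B ∈ 𝓔.piH}}
    (hxB : x ∈ (B : Finset E)) : blkHu 𝓔 hx = B :=
  Subtype.ext (blk_eq 𝓔 (Finset.mem_inter.mp hx).1 (Finset.mem_union_left _ B.2) hxB).symm

lemma fam_congr {τ : Equiv.Perm {B // B ∈ 𝓔.piH}}
    (fam : ∀ B : {B // B ∈ 𝓔.piH},
      (↥((B : Finset E) ∩ 𝓔.Eu) ≃ ↥((τ B : Finset E) ∩ 𝓔.Eu)))
    {B B' : {B // B ∈ 𝓔.piH}} (h : B = B') {x : E}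
    (p : x ∈ (B : Finset E) ∩ 𝓔.Eu) (p' : x ∈ (B' : Finset E) ∩ 𝓔.Eu) :
    ((fam B ⟨x, p⟩ : ↥((τ B : Finset E) ∩ 𝓔.Eu)) : E) = ((fam B' ⟨x, p'⟩ : _) : E) := by
  cases h; rfl

lemma mem_IntU_of_mem_block {B : {B // B ∈ 𝓔.piH}} {x : E}
    (hx : x ∈ (B : Finset E) ∩ 𝓔.Eu) : x ∈ 𝓔.Eint ∩ 𝓔.Eu :=
  Finset.mem_inter.mpr
    ⟨𝓔.blocks_sub _ (Finset.mem_union_left _ B.2) (Finset.mem_inter.mp hx).1,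
      (Finset.mem_inter.mp hx).2⟩

def gsEquiv (τ : TS 𝓔) :
    GS 𝓔 τ.1 ≃ ∀ B : {B // B ∈ 𝓔.piH},
      (↥((B : Finset E) ∩ 𝓔.Eu) ≃ ↥((τ.1 B : Finset E) ∩ 𝓔.Eu)) where
  toFun g B := Equiv.ofBijective
    (fun x => ⟨g.1 x.1, g.2.2.1 B x.1 x.2⟩)
    (by
      have hinj : Function.Injective
          (fun x : ↥((B : Finset E) ∩ 𝓔.Eu) =>
            (⟨g.1 x.1, g.2.2.1 B x.1 x.2⟩ : ↥((τ.1 B : Finset E) ∩ 𝓔.Eu))) := by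
        intro a b hab
        apply Subtype.ext
        have h1 := congrArg Subtype.val hab
        exact g.2.2.2 (Finset.mem_coe.mpr (mem_IntU_of_mem_block 𝓔 a.2))
          (Finset.mem_coe.mpr (mem_IntU_of_mem_block 𝓔 b.2)) h1
      refine (Fintype.bijective_iff_injective_and_card _).mpr ⟨hinj, ?_⟩
      simp only [Fintype.card_coe]
      exact (τ.2 B).symm)
  invFun fam := ⟨fun x => if hx : x ∈ 𝓔.Eint ∩ 𝓔.Eu then
      ((fam (blkHu 𝓔 hx) ⟨x, mem_blkHu 𝓔 hx⟩ : _) : E) else x,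
    fun x hx => dif_neg hx,
    fun B x hxB => by
      have hx : x ∈ 𝓔.Eint ∩ 𝓔.Eu := mem_IntU_of_mem_block 𝓔 hxB
      dsimp only
      rw [dif_pos hx]
      have hbe : blkHu 𝓔 hx = B := blkHu_eq 𝓔 hx (Finset.mem_inter.mp hxB).1
      subst hbe
      exact (fam (blkHu 𝓔 hx) ⟨x, mem_blkHu 𝓔 hx⟩).2,
    by
      intro x hx' y hy' heq
      have hx : x ∈ 𝓔.Eint ∩ 𝓔.Eu := Finset.mem_coe.mp hx'
      have hy : y ∈ 𝓔.Eint ∩ 𝓔.Eu := Finset.mem_coe.mp hy'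
      dsimp only at heq
      rw [dif_pos hx, dif_pos hy] at heq
      have hvx := (fam (blkHu 𝓔 hx) ⟨x, mem_blkHu 𝓔 hx⟩).2
      have hvy := (fam (blkHu 𝓔 hy) ⟨y, mem_blkHu 𝓔 hy⟩).2
      have hblocks : ((τ.1 (blkHu 𝓔 hx) : Finset E)) = ((τ.1 (blkHu 𝓔 hy) : Finset E)) := by
        apply block_unique 𝓔 (Finset.mem_union_left _ (τ.1 (blkHu 𝓔 hx)).2)
          (Finset.mem_union_left _ (τ.1 (blkHu 𝓔 hy)).2)
          (Finset.mem_inter.mp hvx).1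
        rw [heq]
        exact (Finset.mem_inter.mp hvy).1
      have hbe : blkHu 𝓔 hy = blkHu 𝓔 hx :=
        (τ.1.injective (Subtype.ext hblocks)).symm
      have py : y ∈ ((blkHu 𝓔 hx : Finset E)) ∩ 𝓔.Eu := by
        rw [← hbe]; exact mem_blkHu 𝓔 hy
      have heq2 : (fam (blkHu 𝓔 hx) ⟨x, mem_blkHu 𝓔 hx⟩ : _) =
          (fam (blkHu 𝓔 hx) ⟨y, py⟩ : _) := by
        apply Subtype.ext
        rw [heq]
        exact fam_congr 𝓔 fam hbe (mem_blkHu 𝓔 hy) py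
      have := (fam (blkHu 𝓔 hx)).injective heq2
      exact congrArg Subtype.val this⟩
  left_inv g := by
    apply Subtype.ext
    funext x
    show (if hx : x ∈ 𝓔.Eint ∩ 𝓔.Eu then _ else x) = g.1 x
    by_cases hx : x ∈ 𝓔.Eint ∩ 𝓔.Eu
    · rw [dif_pos hx]
      rfl
    · rw [dif_neg hx]
      exact (g.2.1 x hx).symm
  right_inv fam := by
    funext B
    apply Equiv.ext
    intro x
    apply Subtype.ext
    show (if hx : x.1 ∈ 𝓔.Eint ∩ 𝓔.Eu then
        ((fam (blkHu 𝓔 hx) ⟨x.1, mem_blkHu 𝓔 hx⟩ : _) : E) else x.1) = _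
    have hx : x.1 ∈ 𝓔.Eint ∩ 𝓔.Eu := mem_IntU_of_mem_block 𝓔 x.2
    rw [dif_pos hx]
    have hbe : blkHu 𝓔 hx = B := blkHu_eq 𝓔 hx (Finset.mem_inter.mp x.2).1
    rw [fam_congr 𝓔 fam hbe (mem_blkHu 𝓔 hx) x.2]

/-! ### Cardinality computations -/

lemma card_equiv_finsets {s t : Finset E} (h : t.card = s.card) :
    Nat.card (↥s ≃ ↥t) = (s.card).factorial := by
  have hc : Fintype.card ↥s = Fintype.card ↥t := by
    rw [Fintype.card_coe, Fintype.card_coe, h]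
  rw [Nat.card_eq_fintype_card, Fintype.card_equiv (Fintype.equivOfCardEq hc),
    Fintype.card_coe]

lemma card_GS (τ : TS 𝓔) :
    Nat.card (GS 𝓔 τ.1) = ∏ B ∈ 𝓔.piH, ((B ∩ 𝓔.Eu).card).factorial := by
  rw [Nat.card_congr (gsEquiv 𝓔 τ), Nat.card_pi]
  have h1 : ∀ B : {B // B ∈ 𝓔.piH},
      Nat.card (↥((B : Finset E) ∩ 𝓔.Eu) ≃ ↥((τ.1 B : Finset E) ∩ 𝓔.Eu)) =
        (((B : Finset E) ∩ 𝓔.Eu).card).factorial :=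
    fun B => card_equiv_finsets (τ.2 B)
  rw [Finset.prod_congr rfl (fun B _ => h1 B)]
  exact (Finset.prod_subtype 𝓔.piH (fun x => Iff.rfl)
    (fun B => ((B ∩ 𝓔.Eu).card).factorial)).symm

lemma card_permYB :
    Nat.card (Equiv.Perm {B // B ∈ 𝓔.piY}) = (𝓔.piY.card).factorial := by
  rw [Nat.card_eq_fintype_card, Fintype.card_perm, Fintype.card_coe]

lemma card_TS :
    Nat.card (TS 𝓔) = ∏ p ∈ 𝓔.piH.image (fun B => (B ∩ 𝓔.Eu).card),
      ((𝓔.piH.filter fun B => (B ∩ 𝓔.Eu).card = p).card).factorial := by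
  classical
  have h1 : Nat.card (TS 𝓔) = Fintype.card {τ : Equiv.Perm {B // B ∈ 𝓔.piH} //
      (fun B : {B // B ∈ 𝓔.piH} => ((B : Finset E) ∩ 𝓔.Eu).card) ∘ τ =
      (fun B : {B // B ∈ 𝓔.piH} => ((B : Finset E) ∩ 𝓔.Eu).card)} := by
    rw [← Nat.card_eq_fintype_card]
    apply Nat.card_congr
    apply Equiv.subtypeEquivRight
    intro τ
    constructor
    · intro h; funext B; exact h B
    · intro h B; exact congrFun h B
  rw [h1, DomMulAct.stabilizer_card']
  have himg : Finset.univ.image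
        (fun B : {B // B ∈ 𝓔.piH} => ((B : Finset E) ∩ 𝓔.Eu).card) =
      𝓔.piH.image (fun B => (B ∩ 𝓔.Eu).card) := by
    ext p
    simp only [Finset.mem_image]
    constructor
    · rintro ⟨B, -, rfl⟩; exact ⟨B.1, B.2, rfl⟩
    · rintro ⟨B, hB, rfl⟩; exact ⟨⟨B, hB⟩, Finset.mem_univ _, rfl⟩
  rw [himg]
  apply Finset.prod_congr rfl
  intro p _
  congr 1
  rw [Fintype.card_subtype]
  apply Finset.card_bij (fun (B : {B // B ∈ 𝓔.piH}) _ => B.1)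
  · intro B hB
    rw [Finset.mem_filter]
    exact ⟨B.2, (Finset.mem_filter.mp hB).2⟩
  · intro B _ B' _ h
    exact Subtype.ext h
  · intro b hb
    refine ⟨⟨b, (Finset.mem_filter.mp hb).1⟩, ?_, rfl⟩
    rw [Finset.mem_filter]
    exact ⟨Finset.mem_univ _, (Finset.mem_filter.mp hb).2⟩

lemma card_dat : Nat.card (Dat 𝓔) =
    (∏ p ∈ 𝓔.piH.image (fun B => (B ∩ 𝓔.Eu).card),
      ((𝓔.piH.filter fun B => (B ∩ 𝓔.Eu).card = p).card).factorial) *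
    ((∏ B ∈ 𝓔.piH, ((B ∩ 𝓔.Eu).card).factorial) * (𝓔.piY.card).factorial) := by
  classical
  rw [Nat.card_congr (datEquiv 𝓔)]
  letI : Fintype (TS 𝓔) := Fintype.ofFinite _
  letI : ∀ τ : TS 𝓔, Fintype (GS 𝓔 τ.1 × Equiv.Perm {B // B ∈ 𝓔.piY}) :=
    fun τ => Fintype.ofFinite _
  rw [Nat.card_eq_fintype_card, Fintype.card_sigma]
  have h2 : ∀ τ : TS 𝓔, Fintype.card (GS 𝓔 τ.1 × Equiv.Perm {B // B ∈ 𝓔.piY}) =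
      (∏ B ∈ 𝓔.piH, ((B ∩ 𝓔.Eu).card).factorial) * (𝓔.piY.card).factorial := by
    intro τ
    rw [← Nat.card_eq_fintype_card, Nat.card_prod, card_GS 𝓔 τ, card_permYB 𝓔]
  rw [Finset.sum_congr rfl (fun τ _ => h2 τ), Finset.sum_const, Finset.card_univ,
    smul_eq_mul, ← Nat.card_eq_fintype_card, card_TS 𝓔]

end PreFeyAux

/-- **Proposition 6.**  The automorphism group of a pre-Feynman diagram structure `𝓔` of
type `(I,J)` has cardinality `(∏_{p≥2} m_{H,p}! (p!)^{m_{H,p}}) · m_Y!`, where `m_{H,p}`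
is the number of `H`-vertices with `p` `u`-legs and `m_Y = #π_Y`. -/
theorem preFey_autCard {I J E : Type} [Fintype I] [Fintype J] [Fintype E] [DecidableEq E]
    (𝓔 : PreFey I J E) :
    𝓔.autCard =
      (∏ᶠ (p : ℕ) (_ : 2 ≤ p),
          ((𝓔.piH.filter fun B => (B ∩ 𝓔.Eu).card = p).card.factorial *
            (p.factorial) ^ (𝓔.piH.filter fun B => (B ∩ 𝓔.Eu).card = p).card)) *
        (𝓔.piY.card.factorial) := by
  classical
  have hbij : Function.Bijective
      (fun s : {σ : E ≃ E // IsTransportPre σ 𝓔 𝓔} => PreFeyAux.F 𝓔 s.1 s.2) := by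
    constructor
    · rintro ⟨σ, hσ⟩ ⟨σ', hσ'⟩ h
      exact Subtype.ext (PreFeyAux.F_injective 𝓔 σ σ' hσ hσ' h)
    · intro d
      exact ⟨⟨PreFeyAux.sEquiv 𝓔 d, PreFeyAux.sEquiv_transport 𝓔 d⟩,
        PreFeyAux.F_surjective 𝓔 d⟩
  rw [PreFey.autCard, Nat.card_eq_of_bijective _ hbij, PreFeyAux.card_dat 𝓔]
  have hfin : (∏ᶠ (p : ℕ) (_ : 2 ≤ p),
        ((𝓔.piH.filter fun B => (B ∩ 𝓔.Eu).card = p).card.factorial *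
          (p.factorial) ^ (𝓔.piH.filter fun B => (B ∩ 𝓔.Eu).card = p).card)) =
      ∏ p ∈ 𝓔.piH.image (fun B => (B ∩ 𝓔.Eu).card),
        ((𝓔.piH.filter fun B => (B ∩ 𝓔.Eu).card = p).card.factorial *
          (p.factorial) ^ (𝓔.piH.filter fun B => (B ∩ 𝓔.Eu).card = p).card) := by
    apply finprod_cond_eq_prod_of_cond_iff
    intro p hp
    have hmp : (𝓔.piH.filter fun B => (B ∩ 𝓔.Eu).card = p).card ≠ 0 := by
      intro h0
      exact hp (by rw [h0]; simp)
    obtain ⟨B, hB⟩ := Finset.card_pos.mp (Nat.pos_of_ne_zero hmp)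
    have hBmem := (Finset.mem_filter.mp hB).1
    have hBcard := (Finset.mem_filter.mp hB).2
    constructor
    · intro _
      exact Finset.mem_image.mpr ⟨B, hBmem, hBcard⟩
    · intro _
      rw [← hBcard]
      exact (𝓔.H_vertex B hBmem).2
  rw [hfin, Finset.prod_mul_distrib,
    Finset.prod_comp (fun n : ℕ => n.factorial) (fun B => (B ∩ 𝓔.Eu).card)]
  ring

end
end

section
/- Every Feynman diagram structure 𝓕 = (𝓔,𝓒) of type (I,J) on a finite set E satisfies #Ẽ ≤ 2 · (#π_Y + #J), where Ẽ is the derived partition of E consisting of the blocks of π_H, the blocks of π_Y, and the singletons {x} for x ∈ E_ext. (This is the combined content of the size bounds used to ensure summability of the Feynman diagram expansions: the tree-like case with #I = 1, the circuit-like case with I = ∅, and the general case, the conclusion being stated for the derived set Ẽ.) -/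
noncomputable section

/-- The derived set `Ẽ` of a Feynman diagram structure: the partition of `E` made of the
blocks of `π_H`, the blocks of `π_Y` and the singletons of external labels. -/
def Fey.tildeE {I J E : Type} [Fintype E] [DecidableEq E] (𝓕 : Fey I J E) :
    Finset (Finset E) :=
  𝓕.piH ∪ 𝓕.piY ∪ 𝓕.Eext.image (fun x => {x})

/-- **Lemmas 2, 3 and 4.**  Any Feynman diagram structure of type `(I,J)` satisfies the size
bound `#Ẽ ≤ 2(#π_Y + #J)` on its derived set, which ensures the summability of Feynman
diagram expansions. -/
theorem fey_size_bound {I J E : Type} [Fintype I] [Fintype J] [Fintype E] [DecidableEq E]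
    (𝓕 : Fey I J E) :
    𝓕.tildeE.card ≤ 2 * (𝓕.piY.card + Fintype.card J) := by
  classical
  set P := 𝓕.piH ∪ 𝓕.piY with hP
  -- blocks are pairwise disjoint
  have hdisj : ∀ B ∈ P, ∀ B' ∈ P, B ≠ B' → Disjoint B B' := by
    intro B hB B' hB' hne
    rw [Finset.disjoint_left]
    intro x hxB hxB'
    have hx : x ∈ 𝓕.Eint := 𝓕.blocks_sub B hB hxB
    obtain ⟨C, hC, huniq⟩ := 𝓕.blocks_cover x hx
    exact hne ((huniq B ⟨hB, hxB⟩).trans (huniq B' ⟨hB', hxB'⟩).symm)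
  -- sum of card (B ∩ S) over blocks = card (Eint ∩ S)
  have hsum : ∀ S : Finset E, ∑ B ∈ P, (B ∩ S).card = (𝓕.Eint ∩ S).card := by
    intro S
    have hbU : P.biUnion (fun B => B ∩ S) = 𝓕.Eint ∩ S := by
      ext x
      simp only [Finset.mem_biUnion, Finset.mem_inter]
      constructor
      · rintro ⟨B, hB, hxB, hxS⟩
        exact ⟨𝓕.blocks_sub B hB hxB, hxS⟩
      · rintro ⟨hxI, hxS⟩
        obtain ⟨B, ⟨hB, hxB⟩, -⟩ := 𝓕.blocks_cover x hxI
        exact ⟨B, hB, hxB, hxS⟩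
    rw [← hbU, Finset.card_biUnion]
    intro B hB B' hB' hne
    exact (hdisj B hB B' hB' hne).mono Finset.inter_subset_left
      Finset.inter_subset_left
  -- splitting a set by internal/external
  have split : ∀ S : Finset E, S.card = (𝓕.Eint ∩ S).card + (𝓕.Eext ∩ S).card := by
    intro S
    rw [← Finset.card_union_of_disjoint
      ((𝓕.disj_int_ext).mono Finset.inter_subset_left Finset.inter_subset_left),
      ← Finset.union_inter_distrib_right, 𝓕.union_int_ext, Finset.univ_inter]
  -- #Eubar = #Eu via C
  have hcardC : 𝓕.Eubar.card = 𝓕.Eu.card := by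
    apply Finset.card_bij (fun x _ => 𝓕.C x)
    · intro a ha; exact 𝓕.C_mem a ha
    · intro a ha b hb h; exact 𝓕.C_inj ha hb h
    · intro b hb; obtain ⟨a, ha, h⟩ := 𝓕.C_surj b hb; exact ⟨a, ha, h⟩
  -- #(Eext ∩ Eu) = #I
  have hI : (𝓕.Eext ∩ 𝓕.Eu).card = Fintype.card I := by
    symm
    rw [← Finset.card_univ]
    apply Finset.card_bij (fun i _ => 𝓕.rho_u i)
    · intro i _; exact 𝓕.rho_u_mem i
    · intro a _ b _ h; exact 𝓕.rho_u_inj h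
    · intro x hx; obtain ⟨i, h⟩ := 𝓕.rho_u_surj x hx
      exact ⟨i, Finset.mem_univ i, h⟩
  -- #(Eext ∩ Eubar) = #J
  have hJ : (𝓕.Eext ∩ 𝓕.Eubar).card = Fintype.card J := by
    symm
    rw [← Finset.card_univ]
    apply Finset.card_bij (fun j _ => 𝓕.rho_ubar j)
    · intro j _; exact 𝓕.rho_ubar_mem j
    · intro a _ b _ h; exact 𝓕.rho_ubar_inj h
    · intro x hx; obtain ⟨j, h⟩ := 𝓕.rho_ubar_surj x hx
      exact ⟨j, Finset.mem_univ j, h⟩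
  -- internal ū legs count
  have hubar_int : (𝓕.Eint ∩ 𝓕.Eubar).card = 𝓕.piH.card + 𝓕.piY.card := by
    rw [← hsum]
    rw [hP, Finset.sum_union 𝓕.disj_HY]
    have h1 : ∑ B ∈ 𝓕.piH, (B ∩ 𝓕.Eubar).card = 𝓕.piH.card := by
      rw [Finset.sum_congr rfl (fun B hB => (𝓕.H_vertex B hB).1)]
      simp
    have h2 : ∑ B ∈ 𝓕.piY, (B ∩ 𝓕.Eubar).card = 𝓕.piY.card := by
      rw [Finset.sum_congr rfl (fun B hB => (𝓕.Y_vertex B hB).1)]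
      simp
    rw [h1, h2]
  -- internal u legs count (lower bound)
  have hu_int : 2 * 𝓕.piH.card ≤ (𝓕.Eint ∩ 𝓕.Eu).card := by
    rw [← hsum]
    calc 2 * 𝓕.piH.card = ∑ _B ∈ 𝓕.piH, 2 := by
          rw [Finset.sum_const, smul_eq_mul, mul_comm]
      _ ≤ ∑ B ∈ 𝓕.piH, (B ∩ 𝓕.Eu).card :=
          Finset.sum_le_sum (fun B hB => (𝓕.H_vertex B hB).2)
      _ ≤ ∑ B ∈ P, (B ∩ 𝓕.Eu).card :=
          Finset.sum_le_sum_of_subset (by rw [hP]; exact Finset.subset_union_left)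
  -- key inequality: #πH + #I ≤ #πY + #J
  have hkey : 𝓕.piH.card + Fintype.card I ≤ 𝓕.piY.card + Fintype.card J := by
    have e1 : 𝓕.piH.card + 𝓕.piY.card + Fintype.card J = 𝓕.Eubar.card := by
      rw [split 𝓕.Eubar, hubar_int, hJ]
    have e2 : 2 * 𝓕.piH.card + Fintype.card I ≤ 𝓕.Eu.card := by
      rw [split 𝓕.Eu, hI]
      exact Nat.add_le_add_right hu_int _
    omega
  -- #Eext = #I + #J
  have hext : 𝓕.Eext.card = Fintype.card I + Fintype.card J := by
    have split2 : 𝓕.Eext.card = (𝓕.Eext ∩ 𝓕.Eubar).card + (𝓕.Eext ∩ 𝓕.Eu).card := by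
      rw [← Finset.card_union_of_disjoint
        ((𝓕.disj_ubar_u).mono Finset.inter_subset_right Finset.inter_subset_right),
        ← Finset.inter_union_distrib_left, 𝓕.union_ubar_u, Finset.inter_univ]
    rw [split2, hI, hJ]
    omega
  -- put it together
  have htE : 𝓕.tildeE.card ≤ 𝓕.piH.card + 𝓕.piY.card + 𝓕.Eext.card :=
    calc 𝓕.tildeE.card ≤ (𝓕.piH ∪ 𝓕.piY).card + (𝓕.Eext.image (fun x => ({x} : Finset E))).card :=
          Finset.card_union_le _ _
      _ ≤ 𝓕.piH.card + 𝓕.piY.card + 𝓕.Eext.card :=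
          Nat.add_le_add (Finset.card_union_le _ _) (Finset.card_image_le)
  omega

end
end
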